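/- arXiv:2109.02064 — 12 statements merged into one kernel-verified Lean document; each statement's English description precedes it below -/
import Mathlib

section
/- Degenerate Baillon–Haddad theorem, cocoercivity part (Lemma 2.3(i)): Let x₁, x₂ ∈ H and let w₁, w₂ ∈ (ker Q)ᗮ satisfy Q w₁ = B x₁ and Q w₂ = B x₂ (so wᵢ is the pseudo-inverse image Q†(B xᵢ)). Then β · ⟪Q (x₁ − x₂), w₁ − w₂⟫ ≥ ν · ⟪Q (w₁ − w₂), w₁ − w₂⟫; in other words, Q†B is Q-based (ν/β)-cocoercive. -/
/-!
With `w := w₁ - w₂ ∈ (ker Q)ᗮ` we have `Q w = B x₁ - B x₂`. Cauchy–Schwarz and `ν ‖w‖ ≤ ‖Q w‖`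
give `ν ⟪Q w, w⟫ ≤ ‖Q w‖²`, cocoercivity of `B` gives `‖Q w‖² ≤ β ⟪Q w, x₁ - x₂⟫`, and
symmetry of `Q` turns the latter into `β ⟪Q (x₁ - x₂), w⟫`.
-/

open RealInnerProductSpace

lemma mul_inner_le_norm_sq_of_mul_norm_le {H : Type*} [NormedAddCommGroup H]
    [InnerProductSpace ℝ H] {ν : ℝ} (hν : 0 ≤ ν) {u w : H} (h : ν * ‖w‖ ≤ ‖u‖) :
    ν * ⟪u, w⟫ ≤ ‖u‖ ^ 2 :=
  calc ν * ⟪u, w⟫ ≤ ν * (‖u‖ * ‖w‖) := mul_le_mul_of_nonneg_left (real_inner_le_norm u w) hν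
    _ = ‖u‖ * (ν * ‖w‖) := by ring
    _ ≤ ‖u‖ * ‖u‖ := mul_le_mul_of_nonneg_left h (norm_nonneg u)
    _ = ‖u‖ ^ 2 := (sq ‖u‖).symm

theorem stmt_0_general
    {H : Type*} [NormedAddCommGroup H] [InnerProductSpace ℝ H]
    (Q : H →L[ℝ] H)
    (hQsym : ∀ x y : H, ⟪Q x, y⟫ = ⟪x, Q y⟫)
    (ν : ℝ) (hν : 0 < ν)
    (hνQ : ∀ w ∈ (LinearMap.ker (Q : H →ₗ[ℝ] H))ᗮ, ν * ‖w‖ ≤ ‖Q w‖)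
    (β : ℝ)
    (B : H → H)
    (hB : ∀ x y : H, ‖B x - B y‖ ^ 2 ≤ β * ⟪B x - B y, x - y⟫)
    (x₁ x₂ w₁ w₂ : H)
    (hw₁ : w₁ ∈ (LinearMap.ker (Q : H →ₗ[ℝ] H))ᗮ) (hw₂ : w₂ ∈ (LinearMap.ker (Q : H →ₗ[ℝ] H))ᗮ)
    (hQw₁ : Q w₁ = B x₁) (hQw₂ : Q w₂ = B x₂) :
    ν * ⟪Q (w₁ - w₂), w₁ - w₂⟫ ≤ β * ⟪Q (x₁ - x₂), w₁ - w₂⟫ := by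
  have hQw : Q (w₁ - w₂) = B x₁ - B x₂ := by rw [map_sub, hQw₁, hQw₂]
  have hlower : ν * ⟪Q (w₁ - w₂), w₁ - w₂⟫ ≤ ‖Q (w₁ - w₂)‖ ^ 2 :=
    mul_inner_le_norm_sq_of_mul_norm_le hν.le (hνQ _ (Submodule.sub_mem _ hw₁ hw₂))
  have hupper : ‖Q (w₁ - w₂)‖ ^ 2 ≤ β * ⟪Q (w₁ - w₂), x₁ - x₂⟫ := hQw ▸ hB x₁ x₂
  rw [hQsym, real_inner_comm] at hupper
  exact hlower.trans hupper

/-- Degenerate Baillon–Haddad theorem, cocoercivity part (Lemma 2.3(i)):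
`Q†B` is `Q`-based `(ν/β)`-cocoercive. -/
theorem stmt_0
    {H : Type*} [NormedAddCommGroup H] [InnerProductSpace ℝ H] [CompleteSpace H]
    (Q : H →L[ℝ] H)
    (hQsym : ∀ x y : H, ⟪Q x, y⟫ = ⟪x, Q y⟫)
    (hQpos : ∀ x : H, 0 ≤ ⟪Q x, x⟫)
    (ν : ℝ) (hν : 0 < ν)
    (hνQ : ∀ w ∈ (LinearMap.ker (Q : H →ₗ[ℝ] H))ᗮ, ν * ‖w‖ ≤ ‖Q w‖)
    (β : ℝ) (hβ : 0 ≤ β)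
    (B : H → H)
    (hB : ∀ x y : H, ‖B x - B y‖ ^ 2 ≤ β * ⟪B x - B y, x - y⟫)
    (hranB : Set.range B ⊆ Set.range Q)
    (x₁ x₂ w₁ w₂ : H)
    (hw₁ : w₁ ∈ (LinearMap.ker (Q : H →ₗ[ℝ] H))ᗮ) (hw₂ : w₂ ∈ (LinearMap.ker (Q : H →ₗ[ℝ] H))ᗮ)
    (hQw₁ : Q w₁ = B x₁) (hQw₂ : Q w₂ = B x₂) :
    ν * ⟪Q (w₁ - w₂), w₁ - w₂⟫ ≤ β * ⟪Q (x₁ - x₂), w₁ - w₂⟫ :=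
  stmt_0_general Q hQsym ν hν hνQ β B hB x₁ x₂ w₁ w₂ hw₁ hw₂ hQw₁ hQw₂
end

section
/- Lemma 2.4(ii): Let x₁, x₂, y₁, y₂ ∈ H satisfy Q xᵢ − B xᵢ − Q yᵢ ∈ A yᵢ for i = 1, 2 (i.e. yᵢ = T xᵢ), and set rᵢ := xᵢ − yᵢ. Then 4ν · ⟪Q (x₁ − x₂), y₁ − y₂⟫ ≥ 4ν · ⟪Q (y₁ − y₂), y₁ − y₂⟫ − β · ⟪Q (r₁ − r₂), r₁ − r₂⟫; i.e. ⟪Q(x₁−x₂), T x₁ − T x₂⟫ ≥ ‖T x₁ − T x₂‖_Q² − (β/(4ν)) ‖(I−T)x₁ − (I−T)x₂‖_Q². -/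
/-!
Write `d = y₁ - y₂`, `e = r₁ - r₂` and `B x₁ - B x₂ = Q w` with `w ⊥ ker Q`. Monotonicity of `A`
reduces the claim to `0 ≤ 4ν⟪Q w, d⟫ + β‖e‖_Q²`. Cocoercivity gives
`‖Q w‖² ≤ β⟪Q w, d⟫ + β⟪Q w, e⟫`; the last term is bounded by Young's inequality for the
Q-seminorm, `4νβ⟪Q w, e⟫ ≤ 4ν²‖w‖_Q² + β²‖e‖_Q²`, and `ν‖w‖_Q² ≤ ‖Q w‖²` because `Q` is bounded
below by `ν` on `(ker Q)ᗮ`. Hence `0 ≤ β (4ν⟪Q w, d⟫ + β‖e‖_Q²)`, and for `β = 0`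
cocoercivity forces `Q w = 0`.
-/

open RealInnerProductSpace

section

variable {H : Type*} [NormedAddCommGroup H] [InnerProductSpace ℝ H] {Q : H →L[ℝ] H}

theorem two_mul_mul_inner_le_of_symm_of_nonneg (hQsym : ∀ x y : H, ⟪Q x, y⟫ = ⟪x, Q y⟫)
    (hQpos : ∀ x : H, 0 ≤ ⟪Q x, x⟫) (u v : H) (a c : ℝ) :
    2 * (a * c) * ⟪Q u, v⟫ ≤ a ^ 2 * ⟪Q u, u⟫ + c ^ 2 * ⟪Q v, v⟫ := by
  have hvu : ⟪Q v, u⟫ = ⟪Q u, v⟫ := by rw [hQsym, real_inner_comm]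
  have h := hQpos (a • u - c • v)
  simp only [map_sub, map_smul, inner_sub_left, inner_sub_right, real_inner_smul_left,
    real_inner_smul_right, hvu] at h
  linarith

theorem mul_inner_apply_self_le_sq_norm {ν : ℝ} (hν : 0 ≤ ν) {w : H} (hw : ν * ‖w‖ ≤ ‖Q w‖) :
    ν * ⟪Q w, w⟫ ≤ ‖Q w‖ ^ 2 :=
  calc ν * ⟪Q w, w⟫ ≤ ν * (‖Q w‖ * ‖w‖) :=
        mul_le_mul_of_nonneg_left (real_inner_le_norm _ _) hν
    _ = ‖Q w‖ * (ν * ‖w‖) := by ring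
    _ ≤ ‖Q w‖ * ‖Q w‖ := mul_le_mul_of_nonneg_left hw (norm_nonneg _)
    _ = ‖Q w‖ ^ 2 := (sq _).symm

theorem exists_mem_orthogonal_ker_apply_eq [CompleteSpace H] (v : H) :
    ∃ w ∈ (LinearMap.ker (Q : H →ₗ[ℝ] H))ᗮ, Q w = Q v := by
  set K := LinearMap.ker (Q : H →ₗ[ℝ] H)
  have : CompleteSpace K := (ContinuousLinearMap.isClosed_ker Q).completeSpace_coe
  refine ⟨v - K.starProjection v, K.sub_starProjection_mem_orthogonal v, ?_⟩
  have hker : Q (K.starProjection v) = 0 := K.starProjection_apply_mem v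
  rw [map_sub, hker, sub_zero]

theorem nonneg_add_of_cocoercive (hQsym : ∀ x y : H, ⟪Q x, y⟫ = ⟪x, Q y⟫)
    (hQpos : ∀ x : H, 0 ≤ ⟪Q x, x⟫) {ν β : ℝ} (hν : 0 ≤ ν) (hβ : 0 ≤ β) {w d e : H}
    (hw : ν * ⟪Q w, w⟫ ≤ ‖Q w‖ ^ 2) (hco : ‖Q w‖ ^ 2 ≤ β * ⟪Q w, d + e⟫) :
    0 ≤ 4 * ν * ⟪Q w, d⟫ + β * ⟪Q e, e⟫ := by
  rcases hβ.eq_or_lt with rfl | hβ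
  · have hQw : Q w = 0 := by simpa using hco
    simp [hQw]
  · have hyoung := two_mul_mul_inner_le_of_symm_of_nonneg hQsym hQpos w e (2 * ν) β
    rw [inner_add_right] at hco
    have hscaled : 0 ≤ β * (4 * ν * ⟪Q w, d⟫ + β * ⟪Q e, e⟫) := by
      have h4ν : (0 : ℝ) ≤ 4 * ν := by positivity
      linarith [mul_le_mul_of_nonneg_left hco h4ν, mul_le_mul_of_nonneg_left hw h4ν]
    exact nonneg_of_mul_nonneg_right hscaled hβ

end

/-- Lemma 2.4(ii) for the G-FBS operator `T = (A+Q)⁻¹(Q−B)`: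
`⟪Q(x₁−x₂), Tx₁−Tx₂⟫ ≥ ‖Tx₁−Tx₂‖_Q² − (β/(4ν))‖(I−T)x₁−(I−T)x₂‖_Q²`. -/
theorem stmt_3
    {H : Type*} [NormedAddCommGroup H] [InnerProductSpace ℝ H] [CompleteSpace H]
    (Q : H →L[ℝ] H)
    (hQsym : ∀ x y : H, ⟪Q x, y⟫ = ⟪x, Q y⟫)
    (hQpos : ∀ x : H, 0 ≤ ⟪Q x, x⟫)
    (ν : ℝ) (hν : 0 < ν)
    (hνQ : ∀ w ∈ (LinearMap.ker (Q : H →ₗ[ℝ] H))ᗮ, ν * ‖w‖ ≤ ‖Q w‖)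
    (β : ℝ) (hβ : 0 ≤ β)
    (B : H → H)
    (hB : ∀ x y : H, ‖B x - B y‖ ^ 2 ≤ β * ⟪B x - B y, x - y⟫)
    (hranB : Set.range B ⊆ Set.range Q)
    (A : H → Set H)
    (hA : ∀ x y u v : H, u ∈ A x → v ∈ A y → 0 ≤ ⟪u - v, x - y⟫)
    (x₁ x₂ y₁ y₂ : H)
    (hy₁ : Q x₁ - B x₁ - Q y₁ ∈ A y₁)
    (hy₂ : Q x₂ - B x₂ - Q y₂ ∈ A y₂)
    (r₁ r₂ : H) (hr₁ : r₁ = x₁ - y₁) (hr₂ : r₂ = x₂ - y₂) :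
    4 * ν * ⟪Q (y₁ - y₂), y₁ - y₂⟫ - β * ⟪Q (r₁ - r₂), r₁ - r₂⟫ ≤
      4 * ν * ⟪Q (x₁ - x₂), y₁ - y₂⟫ := by
  subst hr₁ hr₂
  obtain ⟨v₁, hv₁⟩ := hranB (Set.mem_range_self x₁)
  obtain ⟨v₂, hv₂⟩ := hranB (Set.mem_range_self x₂)
  obtain ⟨w, hw_perp, hQw⟩ := exists_mem_orthogonal_ker_apply_eq (Q := Q) (v₁ - v₂)
  rw [map_sub, hv₁, hv₂] at hQw
  have hx : x₁ - x₂ = (y₁ - y₂) + ((x₁ - y₁) - (x₂ - y₂)) := by abel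
  have hkey := nonneg_add_of_cocoercive hQsym hQpos hν.le hβ (d := y₁ - y₂)
    (mul_inner_apply_self_le_sq_norm hν.le (hνQ w hw_perp))
    (by rw [hQw, ← hx]; exact hB x₁ x₂)
  have hmono := hA _ _ _ _ hy₁ hy₂
  have hsplit : Q x₁ - B x₁ - Q y₁ - (Q x₂ - B x₂ - Q y₂)
      = Q (x₁ - x₂) - Q w - Q (y₁ - y₂) := by rw [hQw, map_sub, map_sub]; abel
  rw [hsplit, inner_sub_left, inner_sub_left] at hmono
  linarith [mul_nonneg (by positivity : (0 : ℝ) ≤ 4 * ν) hmono]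
end

section
/- Lemma 2.4(iii): Let x₁, x₂, y₁, y₂ ∈ H satisfy Q xᵢ − B xᵢ − Q yᵢ ∈ A yᵢ for i = 1, 2 (i.e. yᵢ = T xᵢ), and set rᵢ := xᵢ − yᵢ. Then 2ν · ⟪Q (y₁ − y₂), y₁ − y₂⟫ + (2ν − β) · ⟪Q (r₁ − r₂), r₁ − r₂⟫ ≤ 2ν · ⟪Q (x₁ − x₂), x₁ − x₂⟫; i.e. ‖T x₁ − T x₂‖_Q² + (1 − β/(2ν)) ‖(I−T)x₁ − (I−T)x₂‖_Q² ≤ ‖x₁ − x₂‖_Q². -/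
open RealInnerProductSpace

/-!
Write `y = y₁ - y₂`, `r = r₁ - r₂`, so `x₁ - x₂ = y + r` and the claim reduces to
`0 ≤ β ‖r‖_Q² + 4ν ⟪Q r, y⟫`. Monotonicity of `A` gives `⟪Q r, y⟫ ≥ ⟪b, y⟫` for
`b = B x₁ - B x₂`. Since `b ∈ range Q` we may write `b = Q w` with `w ⊥ ker Q`, whence
`ν ‖w‖_Q² ≤ ‖b‖²`; Young's inequality for the `Q`-seminorm then bounds `⟪b, r⟫ = ⟪Q w, r⟫`
by `‖w‖_Q²` and `‖r‖_Q²`, and cocoercivity `‖b‖² ≤ β ⟪b, y + r⟫` absorbs the `‖w‖_Q²` term.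
-/

section

variable {E F : Type*} [NormedAddCommGroup E] [InnerProductSpace ℝ E]

theorem mul_inner_le_norm_sq_of_mul_norm_le_s4 {ν : ℝ} (hν : 0 ≤ ν) {a b : E}
    (h : ν * ‖a‖ ≤ ‖b‖) : ν * ⟪b, a⟫ ≤ ‖b‖ ^ 2 :=
  calc ν * ⟪b, a⟫ ≤ ν * (‖b‖ * ‖a‖) := mul_le_mul_of_nonneg_left (real_inner_le_norm b a) hν
    _ = ‖b‖ * (ν * ‖a‖) := by ring
    _ ≤ ‖b‖ ^ 2 := by rw [sq]; exact mul_le_mul_of_nonneg_left h (norm_nonneg b)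

theorem LinearMap.IsSymmetric.inner_map_add_add {T : E →ₗ[ℝ] E} (hT : T.IsSymmetric) (a c : E) :
    ⟪T (a + c), a + c⟫ = ⟪T a, a⟫ + 2 * ⟪T c, a⟫ + ⟪T c, c⟫ := by
  have hsymm : ⟪T a, c⟫ = ⟪T c, a⟫ := by rw [hT, real_inner_comm]
  rw [map_add, inner_add_left, inner_add_right, inner_add_right, hsymm]
  ring

theorem LinearMap.IsPositive.two_mul_mul_inner_le {T : E →ₗ[ℝ] E} (hT : T.IsPositive)
    (s t : ℝ) (a c : E) :
    2 * (s * t) * ⟪T a, c⟫ ≤ s ^ 2 * ⟪T a, a⟫ + t ^ 2 * ⟪T c, c⟫ := by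
  have h := hT.inner_nonneg_left (s • a - t • c)
  have hsymm : ⟪T c, a⟫ = ⟪T a, c⟫ := by rw [hT.isSymmetric c a, real_inner_comm]
  simp only [map_sub, map_smul, inner_sub_left, inner_sub_right, real_inner_smul_left,
    real_inner_smul_right, hsymm] at h
  linarith

theorem LinearMap.IsPositive.four_mul_inner_le_of_cocoercive {T : E →ₗ[ℝ] E}
    (hT : T.IsPositive) {ν β : ℝ} (hν : 0 ≤ ν) (hβ : 0 ≤ β) {w x r : E}
    (hw : ν * ‖w‖ ≤ ‖T w‖) (hx : ‖T w‖ ^ 2 ≤ β * ⟪T w, x⟫) :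
    4 * ν * ⟪T w, r⟫ ≤ 4 * ν * ⟪T w, x⟫ + β * ⟪T r, r⟫ := by
  rcases hβ.eq_or_lt with rfl | hβ
  · have : T w = 0 := by
      rw [← norm_eq_zero]; nlinarith [norm_nonneg (T w)]
    simp [this]
  · have hyoung := hT.two_mul_mul_inner_le (2 * ν) β w r
    have hW := mul_inner_le_norm_sq_of_mul_norm_le_s4 hν hw
    -- Young's inequality with weights `2ν`, `β`, then `ν⟪Tw, w⟫ ≤ ‖Tw‖² ≤ β⟪Tw, x⟫`
    suffices β * (4 * ν * ⟪T w, r⟫) ≤ β * (4 * ν * ⟪T w, x⟫ + β * ⟪T r, r⟫) from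
      le_of_mul_le_mul_left this hβ
    nlinarith

theorem ContinuousLinearMap.exists_mem_orthogonal_ker_apply_eq [CompleteSpace E]
    [NormedAddCommGroup F] [NormedSpace ℝ F] (f : E →L[ℝ] F) (u : E) :
    ∃ w ∈ (LinearMap.ker (f : E →ₗ[ℝ] F))ᗮ, f w = f u := by
  obtain ⟨k, hk, w, hw, rfl⟩ :=
    Submodule.exists_add_mem_mem_orthogonal (K := LinearMap.ker (f : E →ₗ[ℝ] F)) u
  exact ⟨w, hw, by rw [map_add, show f k = 0 from hk, zero_add]⟩

end

/-- Lemma 2.4(iii) for the G-FBS operator `T = (A+Q)⁻¹(Q−B)`: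
`‖Tx₁−Tx₂‖_Q² + (1 − β/(2ν))‖(I−T)x₁−(I−T)x₂‖_Q² ≤ ‖x₁−x₂‖_Q²`. -/
theorem stmt_4
    {H : Type*} [NormedAddCommGroup H] [InnerProductSpace ℝ H] [CompleteSpace H]
    (Q : H →L[ℝ] H)
    (hQsym : ∀ x y : H, ⟪Q x, y⟫ = ⟪x, Q y⟫)
    (hQpos : ∀ x : H, 0 ≤ ⟪Q x, x⟫)
    (ν : ℝ) (hν : 0 < ν)
    (hνQ : ∀ w ∈ (LinearMap.ker (Q : H →ₗ[ℝ] H))ᗮ, ν * ‖w‖ ≤ ‖Q w‖)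
    (β : ℝ) (hβ : 0 ≤ β)
    (B : H → H)
    (hB : ∀ x y : H, ‖B x - B y‖ ^ 2 ≤ β * ⟪B x - B y, x - y⟫)
    (hranB : Set.range B ⊆ Set.range Q)
    (A : H → Set H)
    (hA : ∀ x y u v : H, u ∈ A x → v ∈ A y → 0 ≤ ⟪u - v, x - y⟫)
    (x₁ x₂ y₁ y₂ : H)
    (hy₁ : Q x₁ - B x₁ - Q y₁ ∈ A y₁)
    (hy₂ : Q x₂ - B x₂ - Q y₂ ∈ A y₂)
    (r₁ r₂ : H) (hr₁ : r₁ = x₁ - y₁) (hr₂ : r₂ = x₂ - y₂) :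
    2 * ν * ⟪Q (y₁ - y₂), y₁ - y₂⟫ + (2 * ν - β) * ⟪Q (r₁ - r₂), r₁ - r₂⟫ ≤
      2 * ν * ⟪Q (x₁ - x₂), x₁ - x₂⟫ := by
  have hQ : (Q : H →ₗ[ℝ] H).IsPositive := (LinearMap.isPositive_iff _).2 ⟨hQsym, hQpos⟩
  obtain ⟨u₁, hu₁⟩ := hranB (Set.mem_range_self x₁)
  obtain ⟨u₂, hu₂⟩ := hranB (Set.mem_range_self x₂)
  obtain ⟨w, hw, hQw⟩ := Q.exists_mem_orthogonal_ker_apply_eq (u₁ - u₂)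
  rw [map_sub, hu₁, hu₂] at hQw
  have hx : x₁ - x₂ = (y₁ - y₂) + (r₁ - r₂) := by rw [hr₁, hr₂]; abel
  have hmono : ⟪Q w, y₁ - y₂⟫ ≤ ⟪Q (r₁ - r₂), y₁ - y₂⟫ := by
    have h := hA _ _ _ _ hy₁ hy₂
    rw [← sub_nonneg, ← inner_sub_left, hQw, hr₁, hr₂, map_sub, map_sub, map_sub]
    convert h using 2
    abel
  have hcore := hQ.four_mul_inner_le_of_cocoercive hν.le hβ (r := r₁ - r₂) (hνQ w hw)
    (hQw ▸ hB x₁ x₂)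
  have hexpand := hQ.isSymmetric.inner_map_add_add (y₁ - y₂) (r₁ - r₂)
  simp only [ContinuousLinearMap.coe_coe] at hcore hexpand
  rw [hx, inner_add_right] at hcore
  rw [hx, hexpand]
  have := mul_le_mul_of_nonneg_left hmono (by positivity : (0 : ℝ) ≤ 4 * ν)
  linarith
end

section
/- Theorem 2.5(iv) (Q-based averagedness of the relaxed G-FBS operator): Assume 2ν > β and let γ be a real number with 0 < γ < 2 − β/(2ν). Let x₁, x₂, y₁, y₂ ∈ H satisfy Q xᵢ − B xᵢ − Q yᵢ ∈ A yᵢ for i = 1, 2 (i.e. yᵢ = T xᵢ), and set zᵢ := xᵢ − γ(xᵢ − yᵢ) (i.e. zᵢ = (I − γ(I − T)) xᵢ). Then ⟪Q (z₁ − z₂), z₁ − z₂⟫ ≤ ⟪Q (x₁ − x₂), x₁ − x₂⟫ − γ² · ((4ν − β − 2γν)/(2γν)) · ⟪Q ((x₁ − y₁) − (x₂ − y₂)), (x₁ − y₁) − (x₂ − y₂)⟫; i.e. I − γ(I − T) is Q-based (2γν/(4ν − β))-averaged. -/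
/-!
Write `d = x₁ - x₂`, `w = (x₁ - y₁) - (x₂ - y₂)` and `b = B x₁ - B x₂`. Then
`z₁ - z₂ = d - γ • w`, so after expanding `‖d - γ w‖²_Q` everything reduces to
`(4ν - β) ‖w‖²_Q ≤ 4ν ⟪Q w, d⟫`. Monotonicity of `A` at `y₁, y₂` gives
`⟪b, d - w⟫ ≤ ⟪Q w, d - w⟫`, so it suffices that `4ν (⟪b, d⟫ - ⟪b, w⟫) ≥ -β ‖w‖²_Q`.
Since `b ∈ range Q = Q ((ker Q)ᗮ)`, the lower bound `ν` together with Cauchy–Schwarz for the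
semi-inner product `⟪Q ·, ·⟫` gives `ν ⟪b, w⟫² ≤ ‖b‖² ‖w‖²_Q`; cocoercivity `‖b‖² ≤ β ⟪b, d⟫`
and AM–GM finish the estimate.
-/

open RealInnerProductSpace

theorem four_mul_mul_le_of_mul_sq_le {ν β q n s : ℝ} (hν : 0 ≤ ν) (hn : 0 ≤ n) (hs : 0 ≤ s)
    (h : ν * q ^ 2 ≤ n * s) : 4 * ν * β * q ≤ 4 * ν * n + β ^ 2 * s := by
  have hsq : (4 * ν * β * q) ^ 2 ≤ (4 * ν * n + β ^ 2 * s) ^ 2 := by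
    nlinarith [sq_nonneg (4 * ν * n - β ^ 2 * s),
      mul_le_mul_of_nonneg_left h (by positivity : (0 : ℝ) ≤ 16 * ν * β ^ 2)]
  exact (abs_le_of_sq_le_sq' hsq (by positivity)).2

namespace ContinuousLinearMap

variable {H : Type*} [NormedAddCommGroup H] [InnerProductSpace ℝ H] {Q : H →L[ℝ] H}

theorem IsPositive.inner_map_sub_smul_self (hQ : Q.IsPositive) (d w : H) (γ : ℝ) :
    ⟪Q (d - γ • w), d - γ • w⟫ = ⟪Q d, d⟫ - 2 * γ * ⟪Q w, d⟫ + γ ^ 2 * ⟪Q w, w⟫ := by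
  have hsymm : ⟪Q d, w⟫ = ⟪Q w, d⟫ := by rw [hQ.inner_left_eq_inner_right, real_inner_comm]
  simp only [map_sub, map_smul, inner_sub_left, inner_sub_right, real_inner_smul_left,
    real_inner_smul_right]
  linear_combination (-γ) * hsymm

theorem IsPositive.inner_map_sq_le (hQ : Q.IsPositive) (v w : H) :
    ⟪Q v, w⟫ ^ 2 ≤ ⟪Q v, v⟫ * ⟪Q w, w⟫ := by
  have hsymm : ⟪Q w, v⟫ = ⟪Q v, w⟫ := by rw [hQ.inner_left_eq_inner_right, real_inner_comm]
  have hquad : ∀ t : ℝ, 0 ≤ ⟪Q w, w⟫ * (t * t) + 2 * ⟪Q v, w⟫ * t + ⟪Q v, v⟫ := by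
    intro t
    have hexpand : ⟪Q (t • w + v), t • w + v⟫ =
        ⟪Q w, w⟫ * (t * t) + 2 * ⟪Q v, w⟫ * t + ⟪Q v, v⟫ := by
      simp only [map_add, map_smul, inner_add_left, inner_add_right, real_inner_smul_left,
        real_inner_smul_right]
      linear_combination t * hsymm
    exact hexpand ▸ hQ.inner_nonneg_left _
  have := discrim_le_zero hquad
  rw [discrim] at this
  linarith

theorem exists_mem_orthogonal_ker_apply_eq_s6 [CompleteSpace H] {b : H} (hb : b ∈ Set.range Q) :
    ∃ v ∈ (LinearMap.ker (Q : H →ₗ[ℝ] H))ᗮ, Q v = b := by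
  obtain ⟨a, rfl⟩ := hb
  set K := LinearMap.ker (Q : H →ₗ[ℝ] H)
  have : CompleteSpace K := (Q.isClosed_ker).completeSpace_coe
  refine ⟨a - K.starProjection a, K.sub_starProjection_mem_orthogonal a, ?_⟩
  have hK : Q (K.starProjection a) = 0 := K.starProjection_apply_mem a
  rw [map_sub, hK, sub_zero]

theorem IsPositive.mul_inner_sq_le [CompleteSpace H] (hQ : Q.IsPositive) {ν : ℝ} (hν : 0 ≤ ν)
    (hνQ : ∀ w ∈ (LinearMap.ker (Q : H →ₗ[ℝ] H))ᗮ, ν * ‖w‖ ≤ ‖Q w‖)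
    {b : H} (hb : b ∈ Set.range Q) (w : H) :
    ν * ⟪b, w⟫ ^ 2 ≤ ‖b‖ ^ 2 * ⟪Q w, w⟫ := by
  obtain ⟨v, hv, rfl⟩ := exists_mem_orthogonal_ker_apply_eq_s6 hb
  have hvv : ν * ⟪Q v, v⟫ ≤ ‖Q v‖ ^ 2 :=
    calc ν * ⟪Q v, v⟫ ≤ ν * (‖Q v‖ * ‖v‖) := by gcongr; exact real_inner_le_norm _ _
      _ = ‖Q v‖ * (ν * ‖v‖) := by ring
      _ ≤ ‖Q v‖ * ‖Q v‖ := by gcongr; exact hνQ v hv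
      _ = ‖Q v‖ ^ 2 := by ring
  calc ν * ⟪Q v, w⟫ ^ 2 ≤ ν * (⟪Q v, v⟫ * ⟪Q w, w⟫) := by gcongr; exact hQ.inner_map_sq_le v w
    _ = (ν * ⟪Q v, v⟫) * ⟪Q w, w⟫ := by ring
    _ ≤ ‖Q v‖ ^ 2 * ⟪Q w, w⟫ := by gcongr; exact hQ.inner_nonneg_left w

theorem IsPositive.sub_mul_inner_self_le [CompleteSpace H] (hQ : Q.IsPositive) {ν β : ℝ}
    (hν : 0 < ν) (hβ : 0 ≤ β) {b d w : H} (hcoco : ‖b‖ ^ 2 ≤ β * ⟪b, d⟫)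
    (hmono : ⟪b, d - w⟫ ≤ ⟪Q w, d - w⟫) (hbw : ν * ⟪b, w⟫ ^ 2 ≤ ‖b‖ ^ 2 * ⟪Q w, w⟫) :
    (4 * ν - β) * ⟪Q w, w⟫ ≤ 4 * ν * ⟪Q w, d⟫ := by
  have hs := hQ.inner_nonneg_left w
  have hsplit : ⟪Q w, d⟫ = ⟪Q w, w⟫ + ⟪Q w, d - w⟫ := by rw [inner_sub_right]; ring
  rw [inner_sub_right] at hmono
  suffices -β * ⟪Q w, w⟫ ≤ 4 * ν * (⟪b, d⟫ - ⟪b, w⟫) by nlinarith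
  rcases hβ.eq_or_lt with rfl | hβ
  · have hb : b = 0 := by simpa using hcoco
    simp [hb]
  · have hamgm := four_mul_mul_le_of_mul_sq_le (β := β) hν.le (sq_nonneg ‖b‖) hs hbw
    refine le_of_mul_le_mul_left ?_ hβ
    nlinarith

end ContinuousLinearMap

theorem stmt_6_general
    {H : Type*} [NormedAddCommGroup H] [InnerProductSpace ℝ H] [CompleteSpace H]
    (Q : H →L[ℝ] H)
    (hQsym : ∀ x y : H, ⟪Q x, y⟫ = ⟪x, Q y⟫)
    (hQpos : ∀ x : H, 0 ≤ ⟪Q x, x⟫)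
    (ν : ℝ) (hν : 0 < ν)
    (hνQ : ∀ w ∈ (LinearMap.ker (Q : H →ₗ[ℝ] H))ᗮ, ν * ‖w‖ ≤ ‖Q w‖)
    (β : ℝ) (hβ : 0 ≤ β)
    (γ : ℝ) (hγ0 : 0 < γ)
    (B : H → H)
    (hB : ∀ x y : H, ‖B x - B y‖ ^ 2 ≤ β * ⟪B x - B y, x - y⟫)
    (hranB : Set.range B ⊆ Set.range Q)
    (A : H → Set H)
    (hA : ∀ x y u v : H, u ∈ A x → v ∈ A y → 0 ≤ ⟪u - v, x - y⟫)
    (x₁ x₂ y₁ y₂ : H)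
    (hy₁ : Q x₁ - B x₁ - Q y₁ ∈ A y₁)
    (hy₂ : Q x₂ - B x₂ - Q y₂ ∈ A y₂)
    (z₁ z₂ : H) (hz₁ : z₁ = x₁ - γ • (x₁ - y₁)) (hz₂ : z₂ = x₂ - γ • (x₂ - y₂)) :
    ⟪Q (z₁ - z₂), z₁ - z₂⟫ ≤ ⟪Q (x₁ - x₂), x₁ - x₂⟫ -
      γ ^ 2 * ((4 * ν - β - 2 * γ * ν) / (2 * γ * ν)) *
        ⟪Q ((x₁ - y₁) - (x₂ - y₂)), (x₁ - y₁) - (x₂ - y₂)⟫ := by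
  have hQ : Q.IsPositive := ⟨hQsym, hQpos⟩
  set d := x₁ - x₂
  set w := (x₁ - y₁) - (x₂ - y₂)
  have hb : B x₁ - B x₂ ∈ Set.range Q := by
    obtain ⟨a₁, ha₁⟩ := hranB (Set.mem_range_self x₁)
    obtain ⟨a₂, ha₂⟩ := hranB (Set.mem_range_self x₂)
    exact ⟨a₁ - a₂, by rw [map_sub, ha₁, ha₂]⟩
  have hmono : ⟪B x₁ - B x₂, d - w⟫ ≤ ⟪Q w, d - w⟫ := by
    have h := hA y₁ y₂ _ _ hy₁ hy₂
    have hdw : d - w = y₁ - y₂ := by simp only [d, w]; abel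
    rw [hdw, ← sub_nonneg, ← inner_sub_left]
    convert h using 2
    simp only [w, map_sub]
    abel
  have key := hQ.sub_mul_inner_self_le hν hβ (hB x₁ x₂) hmono (hQ.mul_inner_sq_le hν.le hνQ hb w)
  have hz : z₁ - z₂ = d - γ • w := by rw [hz₁, hz₂]; module
  rw [hz, hQ.inner_map_sub_smul_self]
  have hcoeff : γ ^ 2 * ((4 * ν - β - 2 * γ * ν) / (2 * γ * ν)) =
      γ / (2 * ν) * (4 * ν - β) - γ ^ 2 := by field_simp
  have hscaled := mul_le_mul_of_nonneg_left key (by positivity : 0 ≤ γ / (2 * ν))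
  have hcancel : γ / (2 * ν) * (4 * ν * ⟪Q w, d⟫) = 2 * γ * ⟪Q w, d⟫ := by field_simp; ring
  rw [hcoeff]
  linarith

/-- Theorem 2.5(iv): `I − γ(I − T)` is `Q`-based `(2γν/(4ν − β))`-averaged. -/
theorem stmt_6
    {H : Type*} [NormedAddCommGroup H] [InnerProductSpace ℝ H] [CompleteSpace H]
    (Q : H →L[ℝ] H)
    (hQsym : ∀ x y : H, ⟪Q x, y⟫ = ⟪x, Q y⟫)
    (hQpos : ∀ x : H, 0 ≤ ⟪Q x, x⟫)
    (ν : ℝ) (hν : 0 < ν)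
    (hνQ : ∀ w ∈ (LinearMap.ker (Q : H →ₗ[ℝ] H))ᗮ, ν * ‖w‖ ≤ ‖Q w‖)
    (β : ℝ) (hβ : 0 ≤ β)
    (hνβ : β < 2 * ν)
    (γ : ℝ) (hγ0 : 0 < γ) (hγ1 : γ < 2 - β / (2 * ν))
    (B : H → H)
    (hB : ∀ x y : H, ‖B x - B y‖ ^ 2 ≤ β * ⟪B x - B y, x - y⟫)
    (hranB : Set.range B ⊆ Set.range Q)
    (A : H → Set H)
    (hA : ∀ x y u v : H, u ∈ A x → v ∈ A y → 0 ≤ ⟪u - v, x - y⟫)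
    (x₁ x₂ y₁ y₂ : H)
    (hy₁ : Q x₁ - B x₁ - Q y₁ ∈ A y₁)
    (hy₂ : Q x₂ - B x₂ - Q y₂ ∈ A y₂)
    (z₁ z₂ : H) (hz₁ : z₁ = x₁ - γ • (x₁ - y₁)) (hz₂ : z₂ = x₂ - γ • (x₂ - y₂)) :
    ⟪Q (z₁ - z₂), z₁ - z₂⟫ ≤ ⟪Q (x₁ - x₂), x₁ - x₂⟫ -
      γ ^ 2 * ((4 * ν - β - 2 * γ * ν) / (2 * γ * ν)) *
        ⟪Q ((x₁ - y₁) - (x₂ - y₂)), (x₁ - y₁) - (x₂ - y₂)⟫ :=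
  stmt_6_general Q hQsym hQpos ν hν hνQ β hβ γ hγ0 B hB hranB A hA x₁ x₂ y₁ y₂ hy₁ hy₂ z₁ z₂ hz₁ hz₂
end

section
/- Lemma 4.3(i) (one-step Fejér-type inequality for the relaxed G-FBS iteration with relaxation operator M): Let x, x̃, x⁺ ∈ H satisfy Q x − B x − Q x̃ ∈ A x̃ and x⁺ = x + M(x̃ − x), and let x⋆ ∈ H satisfy −B x⋆ ∈ A x⋆. Then ‖x⁺ − x⋆‖_S² ≤ ‖x − x⋆‖_S² − ‖x − x̃‖_G², i.e. ⟪S(x⁺ − x⋆), x⁺ − x⋆⟫ ≤ ⟪S(x − x⋆), x − x⋆⟫ − ⟪G(x − x̃), x − x̃⟫ (note that M⁻¹(x − x⁺) = x − x̃, so the subtracted term equals the paper's ‖x − x⁺‖²_{M⁻ᵀ G M⁻¹}). -/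
open RealInnerProductSpace

/-!
Write `e = x - x̃`, `d = x - x⋆` and `w = B x - B x⋆`. Since `x⁺ - x⋆ = d - M e` and `S M = Q`,
expanding `‖x⁺ - x⋆‖_S²` and `‖e‖_G²` reduces the claim to `(1 - β/4ν) ⟪Q e, e⟫ ≤ ⟪Q e, d⟫`.
Monotonicity of `A` at `x̃` and `x⋆` gives `⟪Q e, e⟫ + ⟪w, d⟫ - ⟪w, e⟫ ≤ ⟪Q e, d⟫`, so it remains
to show `⟪w, e⟫ - ⟪w, d⟫ ≤ (β/4ν) ⟪Q̃ e, e⟫` (and `⟪Q̃ e, e⟫ = ⟪Q e, e⟫`). Write `w = Q̃ z` with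
`z ⊥ ker Q̃`, so that `ν ⟪Q̃ z, z⟫ ≤ ‖w‖²`; then the Young inequality
`4νβ ⟪Q̃ z, e⟫ ≤ 4ν² ⟪Q̃ z, z⟫ + β² ⟪Q̃ e, e⟫` for the positive form `Q̃` and cocoercivity,
`‖w‖² ≤ β ⟪w, d⟫`, give it.
-/

namespace ContinuousLinearMap

variable {H : Type*} [NormedAddCommGroup H] [InnerProductSpace ℝ H]

theorem exists_mem_orthogonal_ker_apply_eq_s7 [CompleteSpace H] (T : H →L[ℝ] H) {w : H}
    (hw : w ∈ Set.range T) : ∃ z ∈ (LinearMap.ker (T : H →ₗ[ℝ] H))ᗮ, T z = w := by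
  obtain ⟨z, rfl⟩ := hw
  set K := LinearMap.ker (T : H →ₗ[ℝ] H)
  have : CompleteSpace K := T.isClosed_ker.completeSpace_coe
  refine ⟨z - K.starProjection z, K.sub_starProjection_mem_orthogonal z, ?_⟩
  have hK : T (K.starProjection z) = 0 := K.starProjection_apply_mem z
  rw [map_sub, hK, sub_zero]

theorem mul_inner_apply_self_le_norm_sq {T : H →L[ℝ] H} {ν : ℝ} (hν : 0 ≤ ν) {z : H}
    (hz : ν * ‖z‖ ≤ ‖T z‖) : ν * ⟪T z, z⟫ ≤ ‖T z‖ ^ 2 :=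
  calc ν * ⟪T z, z⟫ ≤ ν * (‖T z‖ * ‖z‖) := by gcongr; exact real_inner_le_norm _ _
    _ = ‖T z‖ * (ν * ‖z‖) := by ring
    _ ≤ ‖T z‖ * ‖T z‖ := by gcongr
    _ = ‖T z‖ ^ 2 := by ring

theorem IsPositive.two_mul_mul_inner_le {T : H →L[ℝ] H} (hT : T.IsPositive) (a b : ℝ)
    (z e : H) : 2 * a * b * ⟪T z, e⟫ ≤ a ^ 2 * ⟪T z, z⟫ + b ^ 2 * ⟪T e, e⟫ := by
  have h := hT.inner_nonneg_left (a • z - b • e)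
  have hsymm : ⟪T e, z⟫ = ⟪T z, e⟫ := by
    rw [hT.inner_left_eq_inner_right, real_inner_comm]
  simp only [map_sub, map_smul, inner_sub_left, inner_sub_right, real_inner_smul_left,
    real_inner_smul_right, hsymm] at h
  nlinarith [h]

theorem IsPositive.mul_inner_le [CompleteSpace H] {T : H →L[ℝ] H} (hT : T.IsPositive)
    {ν : ℝ} (hν : 0 < ν)
    (hνT : ∀ z ∈ (LinearMap.ker (T : H →ₗ[ℝ] H))ᗮ, ν * ‖z‖ ≤ ‖T z‖)
    (β : ℝ) {w : H} (hw : w ∈ Set.range T) (e : H) :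
    β * ⟪w, e⟫ ≤ ‖w‖ ^ 2 + β ^ 2 / (4 * ν) * ⟪T e, e⟫ := by
  obtain ⟨z, hz, rfl⟩ := T.exists_mem_orthogonal_ker_apply_eq_s7 hw
  have hyoung := hT.two_mul_mul_inner_le (2 * ν) β z e
  have hTz := mul_inner_apply_self_le_norm_sq hν.le (hνT z hz)
  have h4ν : 4 * ν * (β ^ 2 / (4 * ν) * ⟪T e, e⟫) = β ^ 2 * ⟪T e, e⟫ := by
    field_simp
  refine le_of_mul_le_mul_left ?_ (by positivity : 0 < 4 * ν)
  rw [mul_add, h4ν]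
  nlinarith [hyoung, hTz]

theorem IsPositive.inner_sub_le_of_cocoercive [CompleteSpace H] {T : H →L[ℝ] H}
    (hT : T.IsPositive) {ν : ℝ} (hν : 0 < ν)
    (hνT : ∀ z ∈ (LinearMap.ker (T : H →ₗ[ℝ] H))ᗮ, ν * ‖z‖ ≤ ‖T z‖)
    {β : ℝ} (hβ : 0 ≤ β) {B : H → H}
    (hB : ∀ x y : H, ‖B x - B y‖ ^ 2 ≤ β * ⟪B x - B y, x - y⟫)
    (hranB : Set.range B ⊆ Set.range T) (x y e : H) :
    ⟪B x - B y, e⟫ - ⟪B x - B y, x - y⟫ ≤ β / (4 * ν) * ⟪T e, e⟫ := by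
  have hw : B x - B y ∈ Set.range T := by
    obtain ⟨a, ha⟩ := hranB ⟨x, rfl⟩
    obtain ⟨b, hb⟩ := hranB ⟨y, rfl⟩
    exact ⟨a - b, by rw [map_sub, ha, hb]⟩
  rcases hβ.eq_or_lt with rfl | hβ
  · have hw0 : B x - B y = 0 := by simpa using hB x y
    simp [hw0]
  · have hyoung := hT.mul_inner_le hν hνT β hw e
    have hcoco := hB x y
    refine le_of_mul_le_mul_left ?_ hβ
    have hβ2 : β * (β / (4 * ν) * ⟪T e, e⟫) = β ^ 2 / (4 * ν) * ⟪T e, e⟫ := by ring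
    rw [mul_sub, hβ2]
    linarith

theorem isSelfAdjoint_half_smul_add_adjoint [CompleteSpace H] (Q : H →L[ℝ] H) :
    IsSelfAdjoint ((1 / 2 : ℝ) • (Q + adjoint Q)) :=
  (IsSelfAdjoint.all _).smul (IsSelfAdjoint.add_star_self Q)

theorem inner_half_smul_add_adjoint_apply_self [CompleteSpace H] (Q : H →L[ℝ] H) (v : H) :
    ⟪((1 / 2 : ℝ) • (Q + adjoint Q)) v, v⟫ = ⟪Q v, v⟫ := by
  rw [smul_apply, add_apply, real_inner_smul_left, inner_add_left, adjoint_inner_left,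
    real_inner_comm v]
  ring

theorem inner_smul_add_adjoint_sub_adjoint_comp_apply_self [CompleteSpace H]
    (Q M : H →L[ℝ] H) (c : ℝ) (e : H) :
    ⟪(c • (Q + adjoint Q) - adjoint M ∘L Q) e, e⟫ = 2 * c * ⟪Q e, e⟫ - ⟪Q e, M e⟫ := by
  rw [sub_apply, smul_apply, add_apply, comp_apply, inner_sub_left, real_inner_smul_left,
    inner_add_left, adjoint_inner_left, adjoint_inner_left, real_inner_comm e]
  ring

theorem inner_apply_sub_sub_of_isSymmetric {S : H →L[ℝ] H} (hS : (S : H →ₗ[ℝ] H).IsSymmetric)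
    (d u : H) : ⟪S (d - u), d - u⟫ = ⟪S d, d⟫ - 2 * ⟪S u, d⟫ + ⟪S u, u⟫ := by
  rw [map_sub, inner_sub_left, inner_sub_right, inner_sub_right,
    show ⟪S d, u⟫ = ⟪d, S u⟫ from hS d u, real_inner_comm (S u) d]
  ring

end ContinuousLinearMap

theorem stmt_7_general
    {H : Type*} [NormedAddCommGroup H] [InnerProductSpace ℝ H] [CompleteSpace H]
    (Q : H →L[ℝ] H)
    (Qt : H →L[ℝ] H) (hQt : Qt = (1 / 2 : ℝ) • (Q + ContinuousLinearMap.adjoint Q))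
    (hQtpos : ∀ x : H, 0 ≤ ⟪Qt x, x⟫)
    (ν : ℝ) (hν : 0 < ν)
    (hνQ : ∀ w ∈ (LinearMap.ker (Qt : H →ₗ[ℝ] H))ᗮ, ν * ‖w‖ ≤ ‖Qt w‖)
    (M : H ≃L[ℝ] H)
    (β : ℝ) (hβ : 0 ≤ β)
    (B : H → H)
    (hB : ∀ x y : H, ‖B x - B y‖ ^ 2 ≤ β * ⟪B x - B y, x - y⟫)
    (hranB : Set.range B ⊆ Set.range Qt)
    (S : H →L[ℝ] H) (hS : S = Q ∘L (M.symm : H →L[ℝ] H))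
    (hSsym : ∀ x y : H, ⟪S x, y⟫ = ⟪x, S y⟫)
    (G : H →L[ℝ] H)
    (hG : G = (1 - β / (4 * ν)) • (Q + ContinuousLinearMap.adjoint Q) -
      (ContinuousLinearMap.adjoint (M : H →L[ℝ] H)) ∘L Q)
    (A : H → Set H)
    (hA : ∀ x y u v : H, u ∈ A x → v ∈ A y → 0 ≤ ⟪u - v, x - y⟫)
    (x xt xp xs : H)
    (hxt : Q x - B x - Q xt ∈ A xt)
    (hxp : xp = x + M (xt - x))
    (hxs : -B xs ∈ A xs) :
    ⟪S (xp - xs), xp - xs⟫ ≤ ⟪S (x - xs), x - xs⟫ - ⟪G (x - xt), x - xt⟫ := by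
  have hQt_pos : Qt.IsPositive :=
    (Qt.isPositive_iff').2 ⟨hQt ▸ Q.isSelfAdjoint_half_smul_add_adjoint, hQtpos⟩
  have hB_step : ⟪B x - B xs, x - xt⟫ - ⟪B x - B xs, x - xs⟫ ≤
      β / (4 * ν) * ⟪Q (x - xt), x - xt⟫ := by
    simpa only [hQt, ContinuousLinearMap.inner_half_smul_add_adjoint_apply_self] using
      hQt_pos.inner_sub_le_of_cocoercive hν hνQ hβ hB hranB x xs (x - xt)
  have hA_step : 0 ≤ ⟪Q (x - xt) - (B x - B xs), (x - xs) - (x - xt)⟫ := by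
    convert hA xt xs _ _ hxt hxs using 2
    · rw [map_sub]; abel
    · abel
  have hxp_sub : xp - xs = (x - xs) - M (x - xt) := by
    simp only [hxp, map_sub]; abel
  have hSM : S (M (x - xt)) = Q (x - xt) := by simp [hS]
  rw [hxp_sub, ContinuousLinearMap.inner_apply_sub_sub_of_isSymmetric hSsym, hSM, hG,
    ContinuousLinearMap.inner_smul_add_adjoint_sub_adjoint_comp_apply_self]
  simp only [inner_sub_left, inner_sub_right] at hA_step hB_step
  simp only [ContinuousLinearEquiv.coe_coe, inner_sub_right]
  linarith

/-- Lemma 4.3(i): one-step Fejér-type inequality for the relaxed G-FBS iteration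
with relaxation operator `M`. -/
theorem stmt_7
    {H : Type*} [NormedAddCommGroup H] [InnerProductSpace ℝ H] [CompleteSpace H]
    (Q : H →L[ℝ] H)
    (Qt : H →L[ℝ] H) (hQt : Qt = (1 / 2 : ℝ) • (Q + ContinuousLinearMap.adjoint Q))
    (hQtpos : ∀ x : H, 0 ≤ ⟪Qt x, x⟫)
    (ν : ℝ) (hν : 0 < ν)
    (hνQ : ∀ w ∈ (LinearMap.ker (Qt : H →ₗ[ℝ] H))ᗮ, ν * ‖w‖ ≤ ‖Qt w‖)
    (M : H ≃L[ℝ] H)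
    (β : ℝ) (hβ : 0 ≤ β)
    (B : H → H)
    (hB : ∀ x y : H, ‖B x - B y‖ ^ 2 ≤ β * ⟪B x - B y, x - y⟫)
    (hranB : Set.range B ⊆ Set.range Qt)
    (S : H →L[ℝ] H) (hS : S = Q ∘L (M.symm : H →L[ℝ] H))
    (hSsym : ∀ x y : H, ⟪S x, y⟫ = ⟪x, S y⟫)
    (hSpos : ∀ x : H, 0 ≤ ⟪S x, x⟫)
    (G : H →L[ℝ] H)
    (hG : G = (1 - β / (4 * ν)) • (Q + ContinuousLinearMap.adjoint Q) -
      (ContinuousLinearMap.adjoint (M : H →L[ℝ] H)) ∘L Q)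
    (hGsym : ∀ x y : H, ⟪G x, y⟫ = ⟪x, G y⟫)
    (hGpos : ∀ x : H, 0 ≤ ⟪G x, x⟫)
    (A : H → Set H)
    (hA : ∀ x y u v : H, u ∈ A x → v ∈ A y → 0 ≤ ⟪u - v, x - y⟫)
    (x xt xp xs : H)
    (hxt : Q x - B x - Q xt ∈ A xt)
    (hxp : xp = x + M (xt - x))
    (hxs : -B xs ∈ A xs) :
    ⟪S (xp - xs), xp - xs⟫ ≤ ⟪S (x - xs), x - xs⟫ - ⟪G (x - xt), x - xt⟫ :=
  stmt_7_general Q Qt hQt hQtpos ν hν hνQ M β hβ B hB hranB S hS hSsym G hG A hA x xt xp xs hxt hxp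
    hxs
end

section
/- Lemma 4.3(iii) (monotone decrease of successive differences for the relaxed G-FBS iteration): Let (x_k) and (x̃_k) be sequences in H satisfying, for every k ∈ ℕ, Q x_k − B x_k − Q x̃_k ∈ A x̃_k and x_{k+1} = x_k + M(x̃_k − x_k). Then for every k ∈ ℕ, ‖x_k − x_{k+1}‖_S² − ‖x_{k+1} − x_{k+2}‖_S² ≥ ‖(x_k − x̃_k) − (x_{k+1} − x̃_{k+1})‖_G². -/
/-!
Put `a = x k - x̃ k`, `b = x (k+1) - x̃ (k+1)` and `v = a - b`. The relaxation step gives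
`x k - x (k+1) = M a`, and `S ∘ M = Q`, so by symmetry of `S` the difference of the two squared
`S`-seminorms is `2 ⟪Q v, M a⟫ - ⟪Q v, M v⟫`, while
`‖v‖_G² = 2 (1 - β/(4ν)) ⟪Q v, v⟫ - ⟪Q v, M v⟫`. It remains to show
`(1 - β/(4ν)) ⟪Q v, v⟫ ≤ ⟪Q v, M a⟫`, which is monotonicity of `A` at `x̃ k` and `x̃ (k+1)` once
the term in `B` is bounded: as `B x - B y = Q̃ p`, Cauchy–Schwarz for the positive `Q̃` and the
bound `ν` of `Q̃` off its kernel give `ν ⟪B x - B y, v⟫² ≤ ‖B x - B y‖² ⟪Q̃ v, v⟫`, and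
cocoercivity with AM–GM turns this into the loss `β/(4ν) ⟪Q v, v⟫`.
-/

open RealInnerProductSpace

section

variable {H : Type*} [NormedAddCommGroup H] [InnerProductSpace ℝ H]

def IsMonotoneOperator (A : H → Set H) : Prop :=
  ∀ x y u v : H, u ∈ A x → v ∈ A y → 0 ≤ ⟪u - v, x - y⟫

/-- `IsCocoercive β B` is `(1/β)`-cocoercivity; for `β = 0` it says that `B` is constant. -/
def IsCocoercive (β : ℝ) (B : H → H) : Prop :=
  ∀ x y : H, ‖B x - B y‖ ^ 2 ≤ β * ⟪B x - B y, x - y⟫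

theorem real_inner_nonneg_of_norm_sq_le_mul_inner {β : ℝ} (hβ : 0 ≤ β) {w u : H}
    (h : ‖w‖ ^ 2 ≤ β * ⟪w, u⟫) : 0 ≤ ⟪w, u⟫ := by
  rcases hβ.eq_or_lt with rfl | hβ
  · have hw : w = 0 := by simpa using h
    simp [hw]
  · exact (mul_nonneg_iff_of_pos_left hβ).mp ((sq_nonneg _).trans h)

theorem LinearMap.IsSymmetric.inner_map_self_sub_inner_map_self {S : H →ₗ[ℝ] H}
    (hS : S.IsSymmetric) (y z : H) :
    ⟪S y, y⟫ - ⟪S z, z⟫ = 2 * ⟪S (y - z), y⟫ - ⟪S (y - z), y - z⟫ := by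
  have hzy : ⟪S z, y⟫ = ⟪S y, z⟫ := by rw [hS, real_inner_comm]
  simp only [map_sub, inner_sub_left, inner_sub_right, hzy]
  ring

namespace ContinuousLinearMap

theorem IsPositive.real_inner_sq_le {T : H →L[ℝ] H} (hT : T.IsPositive) (x y : H) :
    ⟪T x, y⟫ ^ 2 ≤ ⟪T x, x⟫ * ⟪T y, y⟫ := by
  have hyx : ⟪T y, x⟫ = ⟪T x, y⟫ := by rw [hT.inner_left_eq_inner_right, real_inner_comm]
  have hquad : ∀ t : ℝ, 0 ≤ ⟪T y, y⟫ * (t * t) + 2 * ⟪T x, y⟫ * t + ⟪T x, x⟫ := fun t ↦ by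
    have h := hT.inner_nonneg_left (x + t • y)
    simp only [map_add, map_smul, inner_add_left, inner_add_right, real_inner_smul_left,
      real_inner_smul_right, hyx] at h
    linarith
  have hdisc := discrim_le_zero hquad
  unfold discrim at hdisc
  nlinarith

variable [CompleteSpace H]

theorem mul_inner_map_self_le_norm_sq {T : H →L[ℝ] H} (hT : (T : H →ₗ[ℝ] H).IsSymmetric)
    {ν : ℝ} (hν : 0 ≤ ν) (hνT : ∀ w ∈ (LinearMap.ker (T : H →ₗ[ℝ] H))ᗮ, ν * ‖w‖ ≤ ‖T w‖)
    (p : H) : ν * ⟪T p, p⟫ ≤ ‖T p‖ ^ 2 := by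
  have : CompleteSpace (LinearMap.ker (T : H →ₗ[ℝ] H)) := T.isClosed_ker.completeSpace_coe
  obtain ⟨p₀, hp₀, p₁, hp₁, rfl⟩ :=
    (LinearMap.ker (T : H →ₗ[ℝ] H)).exists_add_mem_mem_orthogonal p
  have hTp₀ : T p₀ = 0 := hp₀
  have hcross : ⟪T p₁, p₀⟫ = 0 := (hT p₁ p₀).trans (by simp [hTp₀])
  rw [map_add, hTp₀, zero_add, inner_add_right, hcross, zero_add]
  calc ν * ⟪T p₁, p₁⟫ ≤ ν * (‖T p₁‖ * ‖p₁‖) :=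
        mul_le_mul_of_nonneg_left (real_inner_le_norm _ _) hν
    _ = ‖T p₁‖ * (ν * ‖p₁‖) := by ring
    _ ≤ ‖T p₁‖ * ‖T p₁‖ := mul_le_mul_of_nonneg_left (hνT p₁ hp₁) (norm_nonneg _)
    _ = ‖T p₁‖ ^ 2 := (sq _).symm

variable {T : H →L[ℝ] H} {ν : ℝ}

theorem IsPositive.mul_inner_sq_le_of_mem_range (hT : T.IsPositive)
    (hνT : ∀ w ∈ (LinearMap.ker (T : H →ₗ[ℝ] H))ᗮ, ν * ‖w‖ ≤ ‖T w‖) (hν : 0 ≤ ν) {w : H}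
    (hw : w ∈ Set.range T) (v : H) : ν * ⟪w, v⟫ ^ 2 ≤ ‖w‖ ^ 2 * ⟪T v, v⟫ := by
  obtain ⟨p, rfl⟩ := hw
  calc ν * ⟪T p, v⟫ ^ 2 ≤ ν * (⟪T p, p⟫ * ⟪T v, v⟫) :=
        mul_le_mul_of_nonneg_left (hT.real_inner_sq_le p v) hν
    _ = ν * ⟪T p, p⟫ * ⟪T v, v⟫ := by ring
    _ ≤ ‖T p‖ ^ 2 * ⟪T v, v⟫ := mul_le_mul_of_nonneg_right
        (mul_inner_map_self_le_norm_sq hT.isSymmetric hν hνT p) (hT.inner_nonneg_left v)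

theorem IsPositive.inner_le_inner_add_of_norm_sq_le (hT : T.IsPositive)
    (hνT : ∀ w ∈ (LinearMap.ker (T : H →ₗ[ℝ] H))ᗮ, ν * ‖w‖ ≤ ‖T w‖) (hν : 0 < ν) {β : ℝ}
    (hβ : 0 ≤ β) {w u : H} (hw : w ∈ Set.range T) (hwu : ‖w‖ ^ 2 ≤ β * ⟪w, u⟫) (v : H) :
    ⟪w, v⟫ ≤ ⟪w, u⟫ + β / (4 * ν) * ⟪T v, v⟫ := by
  have hs := real_inner_nonneg_of_norm_sq_le_mul_inner hβ hwu
  have hq := hT.inner_nonneg_left v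
  have hr : 0 ≤ β / (4 * ν) * ⟪T v, v⟫ := by positivity
  have hsq : ⟪w, v⟫ ^ 2 ≤ 4 * ⟪w, u⟫ * (β / (4 * ν) * ⟪T v, v⟫) := by
    have hcs := hT.mul_inner_sq_le_of_mem_range hνT hν.le hw v
    rw [show 4 * ⟪w, u⟫ * (β / (4 * ν) * ⟪T v, v⟫) = β * ⟪w, u⟫ * ⟪T v, v⟫ / ν by
      field_simp, le_div_iff₀ hν]
    nlinarith [mul_le_mul_of_nonneg_right hwu hq]
  exact (abs_le_of_sq_le_sq' (hsq.trans (four_mul_le_sq_add _ _)) (add_nonneg hs hr)).2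

theorem isSelfAdjoint_smul_add_adjoint (c : ℝ) (Q : H →L[ℝ] H) :
    IsSelfAdjoint (c • (Q + adjoint Q)) := by
  rw [← star_eq_adjoint]
  exact (IsSelfAdjoint.all c).smul (IsSelfAdjoint.add_star_self Q)

theorem real_inner_smul_add_adjoint_apply_self (c : ℝ) (Q : H →L[ℝ] H) (v : H) :
    ⟪(c • (Q + adjoint Q)) v, v⟫ = 2 * c * ⟪Q v, v⟫ := by
  rw [smul_apply, add_apply, real_inner_smul_left, inner_add_left, adjoint_inner_left,
    real_inner_comm v]
  ring

theorem real_inner_smul_add_adjoint_sub_adjoint_comp_apply_self (c : ℝ) (Q M : H →L[ℝ] H)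
    (v : H) :
    ⟪(c • (Q + adjoint Q) - adjoint M ∘L Q) v, v⟫ = 2 * c * ⟪Q v, v⟫ - ⟪Q v, M v⟫ := by
  rw [sub_apply, comp_apply, inner_sub_left, real_inner_smul_add_adjoint_apply_self,
    adjoint_inner_left]

theorem _root_.IsMonotoneOperator.forwardBackward_inner_le {A : H → Set H}
    (hA : IsMonotoneOperator A) (hT : T.IsPositive)
    (hνT : ∀ w ∈ (LinearMap.ker (T : H →ₗ[ℝ] H))ᗮ, ν * ‖w‖ ≤ ‖T w‖) (hν : 0 < ν) {β : ℝ}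
    (hβ : 0 ≤ β) {B : H → H} (hB : IsCocoercive β B) (hranB : Set.range B ⊆ Set.range T)
    (Q : H →L[ℝ] H) {x₁ x₂ y₁ y₂ : H} (h₁ : Q x₁ - B x₁ - Q y₁ ∈ A y₁)
    (h₂ : Q x₂ - B x₂ - Q y₂ ∈ A y₂) :
    ⟪Q (x₁ - y₁ - (x₂ - y₂)), x₁ - y₁ - (x₂ - y₂)⟫ -
        β / (4 * ν) * ⟪T (x₁ - y₁ - (x₂ - y₂)), x₁ - y₁ - (x₂ - y₂)⟫ ≤
      ⟪Q (x₁ - y₁ - (x₂ - y₂)), x₁ - x₂⟫ := by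
  set v := x₁ - y₁ - (x₂ - y₂) with hv
  have hBrange : B x₁ - B x₂ ∈ Set.range T := by
    obtain ⟨p₁, hp₁⟩ := hranB ⟨x₁, rfl⟩
    obtain ⟨p₂, hp₂⟩ := hranB ⟨x₂, rfl⟩
    exact ⟨p₁ - p₂, by rw [map_sub, hp₁, hp₂]⟩
  have hBv := hT.inner_le_inner_add_of_norm_sq_le hνT hν hβ hBrange (hB x₁ x₂) v
  have hmono := hA _ _ _ _ h₁ h₂
  have hdiff : Q x₁ - B x₁ - Q y₁ - (Q x₂ - B x₂ - Q y₂) = Q v - (B x₁ - B x₂) := by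
    simp only [hv, map_sub]; abel
  have hy : y₁ - y₂ = x₁ - x₂ - v := by rw [hv]; abel
  rw [hdiff, hy, inner_sub_left] at hmono
  simp only [inner_sub_right] at hmono hBv ⊢
  linarith

end ContinuousLinearMap

end

theorem stmt_8_general
    {H : Type*} [NormedAddCommGroup H] [InnerProductSpace ℝ H] [CompleteSpace H]
    (Q : H →L[ℝ] H)
    (Qt : H →L[ℝ] H) (hQt : Qt = (1 / 2 : ℝ) • (Q + ContinuousLinearMap.adjoint Q))
    (hQtpos : ∀ x : H, 0 ≤ ⟪Qt x, x⟫)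
    (ν : ℝ) (hν : 0 < ν)
    (hνQ : ∀ w ∈ (LinearMap.ker (Qt : H →ₗ[ℝ] H))ᗮ, ν * ‖w‖ ≤ ‖Qt w‖)
    (M : H ≃L[ℝ] H)
    (β : ℝ) (hβ : 0 ≤ β)
    (B : H → H)
    (hB : ∀ x y : H, ‖B x - B y‖ ^ 2 ≤ β * ⟪B x - B y, x - y⟫)
    (hranB : Set.range B ⊆ Set.range Qt)
    (S : H →L[ℝ] H) (hS : S = Q ∘L (M.symm : H →L[ℝ] H))
    (hSsym : ∀ x y : H, ⟪S x, y⟫ = ⟪x, S y⟫)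
    (G : H →L[ℝ] H)
    (hG : G = (1 - β / (4 * ν)) • (Q + ContinuousLinearMap.adjoint Q) -
      (ContinuousLinearMap.adjoint (M : H →L[ℝ] H)) ∘L Q)
    (A : H → Set H)
    (hA : ∀ x y u v : H, u ∈ A x → v ∈ A y → 0 ≤ ⟪u - v, x - y⟫)
    (x xt : ℕ → H)
    (hxt : ∀ k : ℕ, Q (x k) - B (x k) - Q (xt k) ∈ A (xt k))
    (hstep : ∀ k : ℕ, x (k + 1) = x k + M (xt k - x k)) :
    ∀ k : ℕ,
      ⟪G ((x k - xt k) - (x (k + 1) - xt (k + 1))),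
          (x k - xt k) - (x (k + 1) - xt (k + 1))⟫ ≤
        ⟪S (x k - x (k + 1)), x k - x (k + 1)⟫ -
          ⟪S (x (k + 1) - x (k + 2)), x (k + 1) - x (k + 2)⟫ := by
  intro k
  have hQtP : Qt.IsPositive := (ContinuousLinearMap.isPositive_iff' Qt).2
    ⟨by rw [hQt]; exact ContinuousLinearMap.isSelfAdjoint_smul_add_adjoint _ Q, hQtpos⟩
  have hQtQ : ∀ v, ⟪Qt v, v⟫ = ⟪Q v, v⟫ := fun v ↦ by
    rw [hQt, ContinuousLinearMap.real_inner_smul_add_adjoint_apply_self]; ring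
  have hSM : ∀ u, S (M u) = Q u := fun u ↦ by simp [hS]
  have hMstep : ∀ j, M (x j - xt j) = x j - x (j + 1) := fun j ↦ by
    rw [hstep j, map_sub, map_sub]; abel
  have hFB := IsMonotoneOperator.forwardBackward_inner_le hA hQtP hνQ hν hβ hB hranB Q
    (hxt k) (hxt (k + 1))
  rw [hQtQ, ← hMstep k] at hFB
  have hSdiff := LinearMap.IsSymmetric.inner_map_self_sub_inner_map_self hSsym
    (M (x k - xt k)) (M (x (k + 1) - xt (k + 1)))
  simp only [ContinuousLinearMap.coe_coe] at hSdiff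
  rw [← hMstep k, show x (k + 1) - x (k + 2) = M (x (k + 1) - xt (k + 1)) from (hMstep _).symm,
    hSdiff, ← map_sub M, hSM, hG,
    ContinuousLinearMap.real_inner_smul_add_adjoint_sub_adjoint_comp_apply_self,
    ContinuousLinearEquiv.coe_coe]
  linarith

/-- Lemma 4.3(iii): monotone decrease of successive differences for the relaxed
G-FBS iteration with relaxation operator `M`. -/
theorem stmt_8
    {H : Type*} [NormedAddCommGroup H] [InnerProductSpace ℝ H] [CompleteSpace H]
    (Q : H →L[ℝ] H)
    (Qt : H →L[ℝ] H) (hQt : Qt = (1 / 2 : ℝ) • (Q + ContinuousLinearMap.adjoint Q))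
    (hQtpos : ∀ x : H, 0 ≤ ⟪Qt x, x⟫)
    (ν : ℝ) (hν : 0 < ν)
    (hνQ : ∀ w ∈ (LinearMap.ker (Qt : H →ₗ[ℝ] H))ᗮ, ν * ‖w‖ ≤ ‖Qt w‖)
    (M : H ≃L[ℝ] H)
    (β : ℝ) (hβ : 0 ≤ β)
    (B : H → H)
    (hB : ∀ x y : H, ‖B x - B y‖ ^ 2 ≤ β * ⟪B x - B y, x - y⟫)
    (hranB : Set.range B ⊆ Set.range Qt)
    (S : H →L[ℝ] H) (hS : S = Q ∘L (M.symm : H →L[ℝ] H))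
    (hSsym : ∀ x y : H, ⟪S x, y⟫ = ⟪x, S y⟫)
    (hSpos : ∀ x : H, 0 ≤ ⟪S x, x⟫)
    (G : H →L[ℝ] H)
    (hG : G = (1 - β / (4 * ν)) • (Q + ContinuousLinearMap.adjoint Q) -
      (ContinuousLinearMap.adjoint (M : H →L[ℝ] H)) ∘L Q)
    (hGsym : ∀ x y : H, ⟪G x, y⟫ = ⟪x, G y⟫)
    (hGpos : ∀ x : H, 0 ≤ ⟪G x, x⟫)
    (A : H → Set H)
    (hA : ∀ x y u v : H, u ∈ A x → v ∈ A y → 0 ≤ ⟪u - v, x - y⟫)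
    (x xt : ℕ → H)
    (hxt : ∀ k : ℕ, Q (x k) - B (x k) - Q (xt k) ∈ A (xt k))
    (hstep : ∀ k : ℕ, x (k + 1) = x k + M (xt k - x k)) :
    ∀ k : ℕ,
      ⟪G ((x k - xt k) - (x (k + 1) - xt (k + 1))),
          (x k - xt k) - (x (k + 1) - xt (k + 1))⟫ ≤
        ⟪S (x k - x (k + 1)), x k - x (k + 1)⟫ -
          ⟪S (x (k + 1) - x (k + 2)), x (k + 1) - x (k + 2)⟫ :=
  stmt_8_general Q Qt hQt hQtpos ν hν hνQ M β hβ B hB hranB S hS hSsym G hG A hA x xt hxt hstep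
end

section
/- Theorem 3.2(i) (finite length in ran Q): Assume 2ν > β. Let (x_k) be a sequence in H satisfying the G-FBS iteration Q x_k − B x_k − Q x_{k+1} ∈ A x_{k+1} for every k ∈ ℕ, and let x⋆ ∈ H satisfy −B x⋆ ∈ A x⋆. Then for every K ∈ ℕ, ∑_{k=0}^{K} ⟪Q(x_{k+1} − x_k), x_{k+1} − x_k⟫ ≤ (2ν/(2ν − β)) · ⟪Q(x_0 − x⋆), x_0 − x⋆⟫; in particular the series ∑_{k=0}^{∞} ‖x_{k+1} − x_k‖_Q² converges. -/
/-!
Set `v := B xₖ - B x⋆` and `u := xₖ₊₁ - xₖ`. Monotonicity of `A` applied to the inclusions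
defining `xₖ₊₁` and `x⋆` bounds `2⟪v, xₖ₊₁ - x⋆⟫` by the decrease of `‖xₖ - x⋆‖_Q²` minus
`‖u‖_Q²`. Cocoercivity gives `‖v‖² ≤ β⟪v, xₖ - x⋆⟫`; since `v = Q z` with `z ⊥ ker Q`, also
`ν‖z‖_Q² ≤ ‖v‖²`, and Young's inequality for the form `‖·‖_Q` absorbs `⟪Q z, u⟫` into these
two terms at the cost of `(β / 2ν)‖u‖_Q²`. This is the per-step descent
`(2ν - β)‖u‖_Q² ≤ 2ν(‖xₖ - x⋆‖_Q² - ‖xₖ₊₁ - x⋆‖_Q²)`, which telescopes.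
-/

open RealInnerProductSpace

section

variable {H : Type*} [NormedAddCommGroup H] [InnerProductSpace ℝ H]

namespace LinearMap

lemma IsSymmetric.two_mul_inner_sub_sub {T : H →ₗ[ℝ] H} (hT : T.IsSymmetric) (a b c : H) :
    2 * ⟪T (a - b), b - c⟫ =
      ⟪T (a - c), a - c⟫ - ⟪T (b - c), b - c⟫ - ⟪T (b - a), b - a⟫ := by
  have hab : ⟪T a, b⟫ = ⟪T b, a⟫ := by rw [hT, real_inner_comm]
  have hac : ⟪T a, c⟫ = ⟪T c, a⟫ := by rw [hT, real_inner_comm]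
  have hbc : ⟪T b, c⟫ = ⟪T c, b⟫ := by rw [hT, real_inner_comm]
  simp only [map_sub, inner_sub_left, inner_sub_right]
  linarith

lemma IsPositive.neg_two_mul_inner_le {T : H →ₗ[ℝ] H} (hT : T.IsPositive) (s t : ℝ) (z u : H) :
    -(2 * s * t * ⟪T z, u⟫) ≤ s ^ 2 * ⟪T z, z⟫ + t ^ 2 * ⟪T u, u⟫ := by
  have hzu : ⟪T u, z⟫ = ⟪T z, u⟫ := by rw [hT.isSymmetric, real_inner_comm]
  have h := hT.inner_nonneg_left (s • z + t • u)
  simp only [map_add, map_smul, inner_add_left, inner_add_right, real_inner_smul_left,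
    real_inner_smul_right, hzu] at h
  linarith

end LinearMap

namespace ContinuousLinearMap

lemma exists_apply_eq_and_mul_inner_le [CompleteSpace H] (Q : H →L[ℝ] H) {ν : ℝ} (hν : 0 ≤ ν)
    (hνQ : ∀ w ∈ (LinearMap.ker (Q : H →ₗ[ℝ] H))ᗮ, ν * ‖w‖ ≤ ‖Q w‖)
    {v : H} (hv : v ∈ Set.range Q) : ∃ z, Q z = v ∧ ν * ⟪Q z, z⟫ ≤ ‖v‖ ^ 2 := by
  obtain ⟨w, rfl⟩ := hv
  have : CompleteSpace (LinearMap.ker (Q : H →ₗ[ℝ] H)) := Q.isClosed_ker.completeSpace_coe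
  obtain ⟨y, hy, z, hz, rfl⟩ := (LinearMap.ker (Q : H →ₗ[ℝ] H)).exists_add_mem_mem_orthogonal w
  have hQz : Q (y + z) = Q z := by
    rw [map_add, show Q y = 0 from LinearMap.mem_ker.mp hy, zero_add]
  refine ⟨z, hQz.symm, ?_⟩
  rw [hQz]
  calc ν * ⟪Q z, z⟫ ≤ ν * (‖Q z‖ * ‖z‖) := by gcongr; exact real_inner_le_norm _ _
    _ = ‖Q z‖ * (ν * ‖z‖) := by ring
    _ ≤ ‖Q z‖ * ‖Q z‖ := by gcongr; exact hνQ z hz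
    _ = ‖Q z‖ ^ 2 := by ring

end ContinuousLinearMap

lemma sum_range_le_of_mul_le_mul_sub_succ {d e : ℕ → ℝ} {a b : ℝ} (ha : 0 < a) (hb : 0 ≤ b)
    (he : ∀ k, 0 ≤ e k) (hde : ∀ k, a * d k ≤ b * (e k - e (k + 1))) (n : ℕ) :
    ∑ k ∈ Finset.range n, d k ≤ b / a * e 0 := by
  rw [div_mul_eq_mul_div, le_div_iff₀' ha]
  calc a * ∑ k ∈ Finset.range n, d k = ∑ k ∈ Finset.range n, a * d k := Finset.mul_sum ..
    _ ≤ ∑ k ∈ Finset.range n, b * (e k - e (k + 1)) := Finset.sum_le_sum fun k _ => hde k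
    _ = b * (e 0 - e n) := by rw [← Finset.mul_sum, Finset.sum_range_sub']
    _ ≤ b * e 0 := by linarith [mul_nonneg hb (he n)]

theorem gfbs_step_descent [CompleteSpace H] {Q : H →L[ℝ] H} (hQ : Q.IsPositive) {ν β : ℝ}
    (hν : 0 ≤ ν) (hβ : 0 ≤ β)
    (hνQ : ∀ w ∈ (LinearMap.ker (Q : H →ₗ[ℝ] H))ᗮ, ν * ‖w‖ ≤ ‖Q w‖)
    {B : H → H} (hB : ∀ x y : H, ‖B x - B y‖ ^ 2 ≤ β * ⟪B x - B y, x - y⟫)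
    (hranB : Set.range B ⊆ Set.range Q)
    {A : H → Set H} (hA : ∀ x y u v : H, u ∈ A x → v ∈ A y → 0 ≤ ⟪u - v, x - y⟫)
    {a b xs : H} (hab : Q a - B a - Q b ∈ A b) (hxs : -B xs ∈ A xs) :
    (2 * ν - β) * ⟪Q (b - a), b - a⟫ ≤
      2 * ν * (⟪Q (a - xs), a - xs⟫ - ⟪Q (b - xs), b - xs⟫) := by
  set v := B a - B xs with hv
  have hmono : 2 * ⟪v, b - xs⟫ ≤
      ⟪Q (a - xs), a - xs⟫ - ⟪Q (b - xs), b - xs⟫ - ⟪Q (b - a), b - a⟫ := by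
    have hid := hQ.isSymmetric.two_mul_inner_sub_sub a b xs
    have h := hA b xs _ _ hab hxs
    rw [show Q a - B a - Q b - -B xs = Q (a - b) - v by rw [hv, map_sub]; abel,
      inner_sub_left] at h
    simp only [ContinuousLinearMap.coe_coe] at hid
    linarith
  have hcoco : ‖v‖ ^ 2 ≤ β * ⟪v, a - xs⟫ := hB a xs
  rcases hβ.eq_or_lt with rfl | hβ
  · have hv0 : v = 0 := by simpa using hcoco
    rw [hv0, inner_zero_left] at hmono
    nlinarith
  · have hsplit : ⟪v, b - xs⟫ = ⟪v, a - xs⟫ + ⟪v, b - a⟫ := by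
      rw [← inner_add_right, sub_add_sub_cancel']
    have hvQ : v ∈ Set.range Q := by
      obtain ⟨w₁, hw₁⟩ := hranB ⟨a, rfl⟩
      obtain ⟨w₂, hw₂⟩ := hranB ⟨xs, rfl⟩
      exact ⟨w₁ - w₂, by rw [map_sub, hw₁, hw₂]⟩
    obtain ⟨z, hQz, hz⟩ := Q.exists_apply_eq_and_mul_inner_le hν hνQ hvQ
    have hyoung := hQ.toLinearMap.neg_two_mul_inner_le (2 * ν) β z (b - a)
    simp only [ContinuousLinearMap.coe_coe, hQz] at hyoung hz
    refine le_of_mul_le_mul_left ?_ hβ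
    rw [hsplit] at hmono
    linarith [mul_le_mul_of_nonneg_left hcoco (by positivity : (0 : ℝ) ≤ 4 * ν),
      mul_le_mul_of_nonneg_left hz (by positivity : (0 : ℝ) ≤ 4 * ν),
      mul_le_mul_of_nonneg_left hmono (by positivity : (0 : ℝ) ≤ 2 * ν * β)]

end

/-- Theorem 3.2(i): finite length of the G-FBS iterates in `ran Q`. -/
theorem stmt_9
    {H : Type*} [NormedAddCommGroup H] [InnerProductSpace ℝ H] [CompleteSpace H]
    (Q : H →L[ℝ] H)
    (hQsym : ∀ x y : H, ⟪Q x, y⟫ = ⟪x, Q y⟫)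
    (hQpos : ∀ x : H, 0 ≤ ⟪Q x, x⟫)
    (ν : ℝ) (hν : 0 < ν)
    (hνQ : ∀ w ∈ (LinearMap.ker (Q : H →ₗ[ℝ] H))ᗮ, ν * ‖w‖ ≤ ‖Q w‖)
    (β : ℝ) (hβ : 0 ≤ β)
    (hνβ : β < 2 * ν)
    (B : H → H)
    (hB : ∀ x y : H, ‖B x - B y‖ ^ 2 ≤ β * ⟪B x - B y, x - y⟫)
    (hranB : Set.range B ⊆ Set.range Q)
    (A : H → Set H)
    (hA : ∀ x y u v : H, u ∈ A x → v ∈ A y → 0 ≤ ⟪u - v, x - y⟫)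
    (x : ℕ → H)
    (hiter : ∀ k : ℕ, Q (x k) - B (x k) - Q (x (k + 1)) ∈ A (x (k + 1)))
    (xs : H) (hxs : -B xs ∈ A xs) :
    (∀ K : ℕ, ∑ k ∈ Finset.range (K + 1),
        ⟪Q (x (k + 1) - x k), x (k + 1) - x k⟫ ≤
        (2 * ν / (2 * ν - β)) * ⟪Q (x 0 - xs), x 0 - xs⟫) ∧
      Summable (fun k : ℕ => ⟪Q (x (k + 1) - x k), x (k + 1) - x k⟫) := by
  have hQ : Q.IsPositive := Q.isPositive_iff.mpr ⟨hQsym, hQpos⟩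
  have hsum := sum_range_le_of_mul_le_mul_sub_succ (by linarith) (by positivity)
    (fun k => hQ.inner_nonneg_left (x k - xs))
    (fun k => gfbs_step_descent hQ hν.le hβ hνQ hB hranB hA (hiter k) hxs)
  exact ⟨fun K => hsum (K + 1),
    summable_of_sum_range_le (fun k => hQ.inner_nonneg_left _) hsum⟩
end

section
/- Theorem 3.2(ii) (Q-based asymptotic regularity): Assume 2ν > β. Let (x_k) be a sequence in H satisfying the G-FBS iteration Q x_k − B x_k − Q x_{k+1} ∈ A x_{k+1} for every k ∈ ℕ, and suppose there exists x⋆ ∈ H with −B x⋆ ∈ A x⋆. Then Q(x_k − x_{k+1}) converges strongly to 0 in H as k → ∞. -/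
open RealInnerProductSpace

/-!
Write `d = x k - x (k + 1)`, `e = x k - xs` and `b = B (x k) - B xs`. Monotonicity of `A` at
`x (k + 1)` and `xs` bounds the decrease of `‖x k - xs‖_Q²` from below by `‖d‖_Q² + 2⟪b, e - d⟫`.
Cocoercivity gives `‖b‖² ≤ β⟪b, e⟫`, and since `b ∈ range Q`, Cauchy–Schwarz for the
`Q`-seminorm together with the closed-range bound gives `ν⟪b, d⟫² ≤ ‖b‖² ‖d‖_Q²`; by AM–GM the
decrease is therefore at least `(1 - β / 2ν) ‖d‖_Q²`. Telescoping, `‖d‖_Q² → 0`, and finally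
`‖Q d‖² ≤ ‖Q‖ ‖d‖_Q²`.
-/

open Filter Topology

theorem four_mul_le_add_of_mul_sq_le {ν β a c q : ℝ} (hν : 0 ≤ ν) (ha : 0 ≤ a) (hβ : 0 ≤ β)
    (hq : 0 ≤ q) (h : ν * c ^ 2 ≤ β * a * q) : 4 * ν * c ≤ β * q + 4 * ν * a := by
  refine abs_le_of_sq_le_sq' ?_ (by positivity) |>.2
  -- AM–GM: `4 (β q) (4 ν a) ≤ (β q + 4 ν a) ^ 2`
  nlinarith [sq_nonneg (β * q - 4 * ν * a), mul_le_mul_of_nonneg_left h hν]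

theorem tendsto_zero_of_mul_le_sub_succ {u V : ℕ → ℝ} {c : ℝ} (hc : 0 < c)
    (hu : ∀ k, 0 ≤ u k) (hV : ∀ k, 0 ≤ V k) (h : ∀ k, c * u k ≤ V k - V (k + 1)) :
    Tendsto u atTop (𝓝 0) := by
  have hanti : Antitone V :=
    antitone_nat_of_succ_le fun k => by nlinarith [h k, mul_nonneg hc.le (hu k)]
  have hlim := tendsto_atTop_ciInf hanti ⟨0, by rintro _ ⟨k, rfl⟩; exact hV k⟩
  have hdiff : Tendsto (fun k => (V k - V (k + 1)) / c) atTop (𝓝 0) := by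
    simpa using (hlim.sub (hlim.comp (tendsto_add_atTop_nat 1))).div_const c
  refine squeeze_zero hu (fun k => ?_) hdiff
  rw [le_div_iff₀ hc, mul_comm]
  exact h k

section

variable {H : Type*} [NormedAddCommGroup H] [InnerProductSpace ℝ H] {Q : H →L[ℝ] H}

theorem real_inner_nonneg_of_norm_sq_le {β : ℝ} (hβ : 0 ≤ β) {u v : H}
    (h : ‖u‖ ^ 2 ≤ β * ⟪u, v⟫) : 0 ≤ ⟪u, v⟫ := by
  rcases hβ.eq_or_lt with rfl | hβ
  · have hu : u = 0 := by simpa using h.trans_eq (zero_mul _)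
    simp [hu]
  · exact nonneg_of_mul_nonneg_right ((sq_nonneg _).trans h) hβ

theorem inner_map_sq_le (hQsym : ∀ x y : H, ⟪Q x, y⟫ = ⟪x, Q y⟫) (hQpos : ∀ x : H, 0 ≤ ⟪Q x, x⟫)
    (v w : H) : ⟪Q v, w⟫ ^ 2 ≤ ⟪Q v, v⟫ * ⟪Q w, w⟫ := by
  have h : ⟪Q v, w⟫ * ⟪Q w, v⟫ ≤ ⟪Q v, v⟫ * ⟪Q w, w⟫ :=
    LinearMap.BilinForm.apply_mul_apply_le_of_forall_zero_le
      ((innerₗ H) ∘ₗ (Q : H →ₗ[ℝ] H)) hQpos v w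
  rwa [hQsym w v, real_inner_comm (Q v) w, ← sq] at h

theorem norm_map_sq_le (hQsym : ∀ x y : H, ⟪Q x, y⟫ = ⟪x, Q y⟫) (hQpos : ∀ x : H, 0 ≤ ⟪Q x, x⟫)
    (v : H) : ‖Q v‖ ^ 2 ≤ ‖Q‖ * ⟪Q v, v⟫ := by
  have hcs : ‖Q v‖ ^ 2 * ‖Q v‖ ^ 2 ≤ ⟪Q v, v⟫ * (‖Q‖ * ‖Q v‖ ^ 2) := by
    calc ‖Q v‖ ^ 2 * ‖Q v‖ ^ 2 = ⟪Q v, Q v⟫ ^ 2 := by rw [real_inner_self_eq_norm_sq]; ring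
      _ ≤ ⟪Q v, v⟫ * ⟪Q (Q v), Q v⟫ := inner_map_sq_le hQsym hQpos v (Q v)
      _ ≤ ⟪Q v, v⟫ * (‖Q‖ * ‖Q v‖ ^ 2) := by
        gcongr
        · exact hQpos v
        · calc ⟪Q (Q v), Q v⟫ ≤ ‖Q (Q v)‖ * ‖Q v‖ := real_inner_le_norm _ _
            _ ≤ ‖Q‖ * ‖Q v‖ * ‖Q v‖ := by gcongr; exact Q.le_opNorm _
            _ = ‖Q‖ * ‖Q v‖ ^ 2 := by ring
  rcases (sq_nonneg ‖Q v‖).eq_or_lt with h0 | hpos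
  · rw [← h0]
    exact mul_nonneg (norm_nonneg Q) (hQpos v)
  · nlinarith

theorem mul_inner_map_self_le_norm_map_sq {ν : ℝ} (hν : 0 ≤ ν)
    (hνQ : ∀ w ∈ (LinearMap.ker (Q : H →ₗ[ℝ] H))ᗮ, ν * ‖w‖ ≤ ‖Q w‖)
    {z : H} (hz : z ∈ (LinearMap.ker (Q : H →ₗ[ℝ] H))ᗮ) : ν * ⟪Q z, z⟫ ≤ ‖Q z‖ ^ 2 :=
  calc ν * ⟪Q z, z⟫ ≤ ν * (‖Q z‖ * ‖z‖) := by gcongr; exact real_inner_le_norm _ _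
    _ = ‖Q z‖ * (ν * ‖z‖) := by ring
    _ ≤ ‖Q z‖ * ‖Q z‖ := by gcongr; exact hνQ z hz
    _ = ‖Q z‖ ^ 2 := by ring

theorem mul_inner_sq_le_of_mem_range [CompleteSpace H]
    (hQsym : ∀ x y : H, ⟪Q x, y⟫ = ⟪x, Q y⟫) (hQpos : ∀ x : H, 0 ≤ ⟪Q x, x⟫)
    {ν : ℝ} (hν : 0 ≤ ν) (hνQ : ∀ w ∈ (LinearMap.ker (Q : H →ₗ[ℝ] H))ᗮ, ν * ‖w‖ ≤ ‖Q w‖)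
    {b : H} (hb : b ∈ Set.range Q) (d : H) : ν * ⟪b, d⟫ ^ 2 ≤ ‖b‖ ^ 2 * ⟪Q d, d⟫ := by
  have : CompleteSpace (LinearMap.ker (Q : H →ₗ[ℝ] H)) :=
    (ContinuousLinearMap.isClosed_ker Q).completeSpace_coe
  obtain ⟨u, rfl⟩ := hb
  obtain ⟨p, hp, z, hz, rfl⟩ := (LinearMap.ker (Q : H →ₗ[ℝ] H)).exists_add_mem_mem_orthogonal u
  have hQp : Q p = 0 := hp
  rw [map_add, hQp, zero_add]
  calc ν * ⟪Q z, d⟫ ^ 2 ≤ ν * (⟪Q z, z⟫ * ⟪Q d, d⟫) := by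
        gcongr; exact inner_map_sq_le hQsym hQpos z d
    _ = ν * ⟪Q z, z⟫ * ⟪Q d, d⟫ := by ring
    _ ≤ ‖Q z‖ ^ 2 * ⟪Q d, d⟫ := by
        gcongr
        · exact hQpos d
        · exact mul_inner_map_self_le_norm_map_sq hν hνQ hz

theorem forwardBackward_descent [CompleteSpace H]
    (hQsym : ∀ x y : H, ⟪Q x, y⟫ = ⟪x, Q y⟫) (hQpos : ∀ x : H, 0 ≤ ⟪Q x, x⟫)
    {ν : ℝ} (hν : 0 ≤ ν) (hνQ : ∀ w ∈ (LinearMap.ker (Q : H →ₗ[ℝ] H))ᗮ, ν * ‖w‖ ≤ ‖Q w‖)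
    {β : ℝ} (hβ : 0 ≤ β) {B : H → H} (hB : ∀ x y : H, ‖B x - B y‖ ^ 2 ≤ β * ⟪B x - B y, x - y⟫)
    (hranB : Set.range B ⊆ Set.range Q)
    {A : H → Set H} (hA : ∀ x y u v : H, u ∈ A x → v ∈ A y → 0 ≤ ⟪u - v, x - y⟫)
    {x x' xs : H} (hstep : Q x - B x - Q x' ∈ A x') (hxs : -B xs ∈ A xs) :
    (2 * ν - β) * ⟪Q (x - x'), x - x'⟫ ≤
      2 * ν * (⟪Q (x - xs), x - xs⟫ - ⟪Q (x' - xs), x' - xs⟫) := by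
  set d := x - x'
  set e := x - xs
  set b := B x - B xs
  have he' : x' - xs = e - d := by simp only [d, e]; abel
  have hmono : ⟪b, e - d⟫ ≤ ⟪Q d, e - d⟫ := by
    have h := hA _ _ _ _ hstep hxs
    rwa [show Q x - B x - Q x' - -B xs = Q d - b by simp only [d, b, map_sub]; abel,
      he', inner_sub_left, sub_nonneg] at h
  have hexpand : ⟪Q e, e⟫ - ⟪Q (e - d), e - d⟫ = ⟪Q d, d⟫ + 2 * ⟪Q d, e - d⟫ := by
    simp only [map_sub, inner_sub_left, inner_sub_right, hQsym e d, real_inner_comm e (Q d)]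
    ring
  have hcoco : ‖b‖ ^ 2 ≤ β * ⟪b, e⟫ := hB x xs
  have hbQ : b ∈ Set.range Q := by
    obtain ⟨u, hu⟩ := hranB (Set.mem_range_self x)
    obtain ⟨u', hu'⟩ := hranB (Set.mem_range_self xs)
    exact ⟨u - u', by rw [map_sub, hu, hu']⟩
  have hcross : ν * ⟪b, d⟫ ^ 2 ≤ β * ⟪b, e⟫ * ⟪Q d, d⟫ :=
    (mul_inner_sq_le_of_mem_range hQsym hQpos hν hνQ hbQ d).trans
      (mul_le_mul_of_nonneg_right hcoco (hQpos d))
  have key := four_mul_le_add_of_mul_sq_le hν (real_inner_nonneg_of_norm_sq_le hβ hcoco) hβ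
    (hQpos d) hcross
  rw [inner_sub_right] at hmono
  rw [he', hexpand]
  linarith [mul_le_mul_of_nonneg_left hmono hν]

end

theorem stmt_10_general
    {H : Type*} [NormedAddCommGroup H] [InnerProductSpace ℝ H] [CompleteSpace H]
    (Q : H →L[ℝ] H)
    (hQsym : ∀ x y : H, ⟪Q x, y⟫ = ⟪x, Q y⟫)
    (hQpos : ∀ x : H, 0 ≤ ⟪Q x, x⟫)
    (ν : ℝ)
    (hνQ : ∀ w ∈ (LinearMap.ker (Q : H →ₗ[ℝ] H))ᗮ, ν * ‖w‖ ≤ ‖Q w‖)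
    (β : ℝ) (hβ : 0 ≤ β)
    (hνβ : β < 2 * ν)
    (B : H → H)
    (hB : ∀ x y : H, ‖B x - B y‖ ^ 2 ≤ β * ⟪B x - B y, x - y⟫)
    (hranB : Set.range B ⊆ Set.range Q)
    (A : H → Set H)
    (hA : ∀ x y u v : H, u ∈ A x → v ∈ A y → 0 ≤ ⟪u - v, x - y⟫)
    (x : ℕ → H)
    (hiter : ∀ k : ℕ, Q (x k) - B (x k) - Q (x (k + 1)) ∈ A (x (k + 1)))
    (xs : H) (hxs : -B xs ∈ A xs) :
    Filter.Tendsto (fun k : ℕ => Q (x k - x (k + 1))) Filter.atTop (nhds 0) := by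
  have hν : 0 ≤ ν := by linarith
  have hdist : Tendsto (fun k => ⟪Q (x k - x (k + 1)), x k - x (k + 1)⟫) atTop (𝓝 0) := by
    refine tendsto_zero_of_mul_le_sub_succ (sub_pos.2 hνβ) (fun k => hQpos _)
      (V := fun k => 2 * ν * ⟪Q (x k - xs), x k - xs⟫)
      (fun k => mul_nonneg (by positivity) (hQpos _)) fun k => ?_
    rw [← mul_sub]
    exact forwardBackward_descent hQsym hQpos hν hνQ hβ hB hranB hA (hiter k) hxs
  have hbound : ∀ k, ‖Q (x k - x (k + 1))‖ ≤
      √(‖Q‖ * ⟪Q (x k - x (k + 1)), x k - x (k + 1)⟫) := fun k =>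
    (Real.le_sqrt (norm_nonneg _) (mul_nonneg (norm_nonneg Q) (hQpos _))).2
      (norm_map_sq_le hQsym hQpos _)
  exact squeeze_zero_norm hbound (by simpa using (hdist.const_mul ‖Q‖).sqrt)

/-- Theorem 3.2(ii): `Q`-based asymptotic regularity of the G-FBS iteration. -/
theorem stmt_10
    {H : Type*} [NormedAddCommGroup H] [InnerProductSpace ℝ H] [CompleteSpace H]
    (Q : H →L[ℝ] H)
    (hQsym : ∀ x y : H, ⟪Q x, y⟫ = ⟪x, Q y⟫)
    (hQpos : ∀ x : H, 0 ≤ ⟪Q x, x⟫)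
    (ν : ℝ) (hν : 0 < ν)
    (hνQ : ∀ w ∈ (LinearMap.ker (Q : H →ₗ[ℝ] H))ᗮ, ν * ‖w‖ ≤ ‖Q w‖)
    (β : ℝ) (hβ : 0 ≤ β)
    (hνβ : β < 2 * ν)
    (B : H → H)
    (hB : ∀ x y : H, ‖B x - B y‖ ^ 2 ≤ β * ⟪B x - B y, x - y⟫)
    (hranB : Set.range B ⊆ Set.range Q)
    (A : H → Set H)
    (hA : ∀ x y u v : H, u ∈ A x → v ∈ A y → 0 ≤ ⟪u - v, x - y⟫)
    (x : ℕ → H)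
    (hiter : ∀ k : ℕ, Q (x k) - B (x k) - Q (x (k + 1)) ∈ A (x (k + 1)))
    (xs : H) (hxs : -B xs ∈ A xs) :
    Filter.Tendsto (fun k : ℕ => Q (x k - x (k + 1))) Filter.atTop (nhds 0) :=
  stmt_10_general Q hQsym hQpos ν hνQ β hβ hνβ B hB hranB A hA x hiter xs hxs
end

section
/- Theorem 3.2(iii) (O(1/√k) rate of Q-based regularity): Assume 2ν > β. Let (x_k) be a sequence in H satisfying the G-FBS iteration Q x_k − B x_k − Q x_{k+1} ∈ A x_{k+1} for every k ∈ ℕ, and let x⋆ ∈ H satisfy −B x⋆ ∈ A x⋆. Then for every k ∈ ℕ, ⟪Q(x_{k+1} − x_k), x_{k+1} − x_k⟫ ≤ (1/(k+1)) · (2ν/(2ν − β)) · ⟪Q(x_0 − x⋆), x_0 − x⋆⟫; equivalently, ‖x_{k+1} − x_k‖_Q ≤ (1/√(k+1)) · √(2ν/(2ν − β)) · ‖x_0 − x⋆‖_Q. -/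
/-!
Write `‖v‖_Q² = ⟪Q v, v⟫`. An increment `B x - B y` of `B` has a preimage `z ∈ (ker Q)ᗮ`, for
which `ν ‖z‖_Q² ≤ ‖B x - B y‖²`; so the cocoercivity of `B` in the norm of `H` transfers to the
`Q`-seminorm with constant `β / ν`. Together with the monotonicity of `A` this makes the iteration
Fejér monotone, `‖x₁ - x⋆‖_Q² + (1 - β/(2ν)) ‖x₁ - x₀‖_Q² ≤ ‖x₀ - x⋆‖_Q²`, and makes the residuals
`‖x_{k+1} - x_k‖_Q` nonincreasing. Telescoping the first inequality and bounding each residual by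
the last one gives the rate.
-/

open RealInnerProductSpace

namespace ContinuousLinearMap.IsPositive

variable {H : Type*} [NormedAddCommGroup H] [InnerProductSpace ℝ H] {Q : H →L[ℝ] H}

lemma inner_map_comm (hQ : Q.IsPositive) (a b : H) : ⟪Q a, b⟫ = ⟪Q b, a⟫ := by
  rw [hQ.inner_left_eq_inner_right, real_inner_comm]

lemma inner_map_add_add (hQ : Q.IsPositive) (a b : H) :
    ⟪Q (a + b), a + b⟫ = ⟪Q a, a⟫ + 2 * ⟪Q a, b⟫ + ⟪Q b, b⟫ := by
  rw [map_add, inner_add_left, inner_add_right, inner_add_right, hQ.inner_map_comm b a]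
  ring

lemma inner_map_self_le_of_inner_sub_nonneg (hQ : Q.IsPositive) {p d : H}
    (h : 0 ≤ ⟪Q (p - d), d⟫) : ⟪Q d, d⟫ ≤ ⟪Q p, p⟫ := by
  have hp := hQ.inner_map_add_add (p - d) d
  rw [sub_add_cancel] at hp
  linarith [hQ.inner_nonneg_left (p - d)]

/-- Young's inequality in the `Q`-seminorm with weight `β / (2ν)`; for `β = 0`, cocoercivity
forces `Q z = 0` instead. -/
lemma neg_two_inner_le {ν β : ℝ} (hQ : Q.IsPositive) (hν : 0 < ν) (hβ : 0 ≤ β) {z w : H}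
    (hz : ν * ⟪Q z, z⟫ ≤ ‖Q z‖ ^ 2) (hcoco : ‖Q z‖ ^ 2 ≤ β * ⟪Q z, w⟫) (v : H) :
    -(2 * ⟪Q z, w + v⟫) ≤ β / (2 * ν) * ⟪Q v, v⟫ := by
  rcases hβ.eq_or_lt with rfl | hβ
  · have : Q z = 0 := by simpa using hcoco
    simp [this]
  set s := β / (2 * ν) with hs
  have hs0 : 0 < s := by positivity
  have hyoung := hQ.inner_nonneg_left (s • v + z)
  rw [hQ.inner_map_add_add, map_smul, real_inner_smul_left, real_inner_smul_left,
    real_inner_smul_right, hQ.inner_map_comm v z] at hyoung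
  have hsν : s * (2 * ν) = β := by rw [hs]; field_simp
  clear_value s
  have hzw : ⟪Q z, z⟫ ≤ 2 * s * ⟪Q z, w⟫ := by
    refine le_of_mul_le_mul_left ?_ hν
    linear_combination hz + hcoco - ⟪Q z, w⟫ * hsν
  rw [inner_add_right]
  refine le_of_mul_le_mul_left ?_ hs0
  nlinarith

end ContinuousLinearMap.IsPositive

lemma inner_nonneg_of_sq_norm_le {E : Type*} [NormedAddCommGroup E] [InnerProductSpace ℝ E]
    {β : ℝ} (hβ : 0 ≤ β) {u w : E} (h : ‖u‖ ^ 2 ≤ β * ⟪u, w⟫) : 0 ≤ ⟪u, w⟫ := by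
  by_contra! hneg
  have hu : u = 0 := by
    have : ‖u‖ ^ 2 ≤ 0 := h.trans (mul_nonpos_of_nonneg_of_nonpos hβ hneg.le)
    simpa using this
  simp [hu] at hneg

lemma exists_preimage_inner_le {H : Type*} [NormedAddCommGroup H] [InnerProductSpace ℝ H]
    [CompleteSpace H] {Q : H →L[ℝ] H} {ν : ℝ} (hν : 0 ≤ ν)
    (hνQ : ∀ w ∈ (LinearMap.ker (Q : H →ₗ[ℝ] H))ᗮ, ν * ‖w‖ ≤ ‖Q w‖) {u : H}
    (hu : u ∈ Set.range Q) : ∃ z, Q z = u ∧ ν * ⟪Q z, z⟫ ≤ ‖u‖ ^ 2 := by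
  obtain ⟨w, rfl⟩ := hu
  have : CompleteSpace (LinearMap.ker (Q : H →ₗ[ℝ] H)) := Q.isClosed_ker.completeSpace_coe
  obtain ⟨y, hy, z, hz, rfl⟩ := (LinearMap.ker (Q : H →ₗ[ℝ] H)).exists_add_mem_mem_orthogonal w
  have hQy : Q y = 0 := hy
  refine ⟨z, by rw [map_add, hQy, zero_add], ?_⟩
  rw [map_add, hQy, zero_add]
  calc ν * ⟪Q z, z⟫ ≤ ν * (‖Q z‖ * ‖z‖) := by gcongr; exact real_inner_le_norm _ _
    _ = ‖Q z‖ * (ν * ‖z‖) := by ring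
    _ ≤ ‖Q z‖ * ‖Q z‖ := by gcongr; exact hνQ z hz
    _ = ‖Q z‖ ^ 2 := (sq _).symm

lemma add_one_mul_add_le_of_descent {c : ℝ} (hc : 0 ≤ c) {d e : ℕ → ℝ}
    (he : ∀ k, e (k + 1) + c * d k ≤ e k) (hd : ∀ k, d (k + 1) ≤ d k) :
    ∀ k : ℕ, ((k : ℝ) + 1) * c * d k + e (k + 1) ≤ e 0 := by
  intro k
  induction k with
  | zero => simpa [add_comm] using he 0
  | succ k ih =>
    have hmono : ((k : ℝ) + 1) * c * d (k + 1) ≤ ((k : ℝ) + 1) * c * d k :=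
      mul_le_mul_of_nonneg_left (hd k) (by positivity)
    push_cast
    linarith [he (k + 1)]

section GeneralizedForwardBackward

variable {H : Type*} [NormedAddCommGroup H] [InnerProductSpace ℝ H]
  {Q : H →L[ℝ] H} {B : H → H} {A : H → Set H} {ν β : ℝ}

lemma gfbs_residual_le (hQ : Q.IsPositive) (hν : 0 < ν) (hβ : 0 ≤ β) (hβν : β ≤ 2 * ν)
    (hB : ∀ x y, ‖B x - B y‖ ^ 2 ≤ β * ⟪B x - B y, x - y⟫)
    (hBQ : ∀ x y, ∃ z, Q z = B x - B y ∧ ν * ⟪Q z, z⟫ ≤ ‖B x - B y‖ ^ 2)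
    (hA : ∀ x y u v, u ∈ A x → v ∈ A y → 0 ≤ ⟪u - v, x - y⟫) {x₀ x₁ x₂ : H}
    (h₁ : Q x₀ - B x₀ - Q x₁ ∈ A x₁) (h₂ : Q x₁ - B x₁ - Q x₂ ∈ A x₂) :
    ⟪Q (x₂ - x₁), x₂ - x₁⟫ ≤ ⟪Q (x₁ - x₀), x₁ - x₀⟫ := by
  obtain ⟨z, hQz, hz⟩ := hBQ x₀ x₁
  have hcoco := hB x₀ x₁
  rw [← hQz] at hz hcoco
  have hzw : ⟪Q z, z⟫ ≤ 2 * ⟪Q z, x₀ - x₁⟫ := by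
    have := inner_nonneg_of_sq_norm_le hβ hcoco
    refine le_of_mul_le_mul_left ?_ hν
    nlinarith
  rw [← neg_sub x₁ x₀, inner_neg_right] at hzw
  -- monotonicity of `A` makes `x₂ - x₁` `Q`-shorter than `(x₁ - x₀) + z`
  have hmon := hA _ _ _ _ h₂ h₁
  have hstep : Q x₁ - B x₁ - Q x₂ - (Q x₀ - B x₀ - Q x₁) = Q ((x₁ - x₀) + z - (x₂ - x₁)) := by
    simp only [map_sub, map_add, hQz]; abel
  rw [hstep] at hmon
  refine (hQ.inner_map_self_le_of_inner_sub_nonneg hmon).trans ?_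
  rw [hQ.inner_map_add_add, hQ.inner_map_comm (x₁ - x₀) z]
  linarith

lemma gfbs_fejer (hQ : Q.IsPositive) (hν : 0 < ν) (hβ : 0 ≤ β)
    (hB : ∀ x y, ‖B x - B y‖ ^ 2 ≤ β * ⟪B x - B y, x - y⟫)
    (hBQ : ∀ x y, ∃ z, Q z = B x - B y ∧ ν * ⟪Q z, z⟫ ≤ ‖B x - B y‖ ^ 2)
    (hA : ∀ x y u v, u ∈ A x → v ∈ A y → 0 ≤ ⟪u - v, x - y⟫) {x₀ x₁ xs : H}
    (h₁ : Q x₀ - B x₀ - Q x₁ ∈ A x₁) (hxs : -B xs ∈ A xs) :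
    ⟪Q (x₁ - xs), x₁ - xs⟫ + (1 - β / (2 * ν)) * ⟪Q (x₁ - x₀), x₁ - x₀⟫ ≤
      ⟪Q (x₀ - xs), x₀ - xs⟫ := by
  obtain ⟨z, hQz, hz⟩ := hBQ x₀ xs
  have hcoco := hB x₀ xs
  rw [← hQz] at hz hcoco
  have hyoung := hQ.neg_two_inner_le hν hβ hz hcoco (x₁ - x₀)
  rw [sub_add_sub_cancel'] at hyoung
  have hmon := hA _ _ _ _ h₁ hxs
  have hstep : Q x₀ - B x₀ - Q x₁ - -B xs = -Q (x₁ - x₀ + z) := by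
    simp only [map_sub, map_add, hQz]; abel
  rw [hstep, inner_neg_left, map_add, inner_add_left] at hmon
  have hsplit := hQ.inner_map_add_add (x₁ - xs) (-(x₁ - x₀))
  rw [← sub_eq_add_neg, sub_sub_sub_cancel_left, map_neg, inner_neg_neg, inner_neg_right,
    hQ.inner_map_comm (x₁ - xs) (x₁ - x₀)] at hsplit
  linarith

end GeneralizedForwardBackward

/-- Theorem 3.2(iii): `O(1/√k)` rate of `Q`-based regularity of the G-FBS iteration. -/
theorem stmt_11
    {H : Type*} [NormedAddCommGroup H] [InnerProductSpace ℝ H] [CompleteSpace H]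
    (Q : H →L[ℝ] H)
    (hQsym : ∀ x y : H, ⟪Q x, y⟫ = ⟪x, Q y⟫)
    (hQpos : ∀ x : H, 0 ≤ ⟪Q x, x⟫)
    (ν : ℝ) (hν : 0 < ν)
    (hνQ : ∀ w ∈ (LinearMap.ker (Q : H →ₗ[ℝ] H))ᗮ, ν * ‖w‖ ≤ ‖Q w‖)
    (β : ℝ) (hβ : 0 ≤ β)
    (hνβ : β < 2 * ν)
    (B : H → H)
    (hB : ∀ x y : H, ‖B x - B y‖ ^ 2 ≤ β * ⟪B x - B y, x - y⟫)
    (hranB : Set.range B ⊆ Set.range Q)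
    (A : H → Set H)
    (hA : ∀ x y u v : H, u ∈ A x → v ∈ A y → 0 ≤ ⟪u - v, x - y⟫)
    (x : ℕ → H)
    (hiter : ∀ k : ℕ, Q (x k) - B (x k) - Q (x (k + 1)) ∈ A (x (k + 1)))
    (xs : H) (hxs : -B xs ∈ A xs) :
    ∀ k : ℕ, ⟪Q (x (k + 1) - x k), x (k + 1) - x k⟫ ≤
      (1 / ((k : ℝ) + 1)) * (2 * ν / (2 * ν - β)) * ⟪Q (x 0 - xs), x 0 - xs⟫ := by
  have hQ : Q.IsPositive := Q.isPositive_iff.2 ⟨hQsym, hQpos⟩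
  have hBQ (a b : H) : ∃ z, Q z = B a - B b ∧ ν * ⟪Q z, z⟫ ≤ ‖B a - B b‖ ^ 2 := by
    obtain ⟨p, hp⟩ := hranB ⟨a, rfl⟩
    obtain ⟨q, hq⟩ := hranB ⟨b, rfl⟩
    exact exists_preimage_inner_le hν.le hνQ ⟨p - q, by rw [map_sub, hp, hq]⟩
  have hc : 0 < 1 - β / (2 * ν) := by
    rw [sub_pos, div_lt_one (by positivity)]
    exact hνβ
  have hrate := add_one_mul_add_le_of_descent hc.le
    (d := fun k ↦ ⟪Q (x (k + 1) - x k), x (k + 1) - x k⟫)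
    (e := fun k ↦ ⟪Q (x k - xs), x k - xs⟫)
    (fun k ↦ gfbs_fejer hQ hν hβ hB hBQ hA (hiter k) hxs)
    (fun k ↦ gfbs_residual_le hQ hν hβ hνβ.le hB hBQ hA (hiter k) (hiter (k + 1)))
  intro k
  have hcoeff : 1 / ((k : ℝ) + 1) * (2 * ν / (2 * ν - β)) =
      1 / (((k : ℝ) + 1) * (1 - β / (2 * ν))) := by
    field_simp
  rw [hcoeff, one_div_mul_eq_div, le_div_iff₀ (by positivity), mul_comm]
  linarith [hrate k, hQpos (x (k + 1) - xs)]
end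

section
/- Corollary 3.3(i) (rate of Q-based regularity for the degenerate metric proximal point algorithm): Let (x_k) be a sequence in H satisfying Q x_k − Q x_{k+1} ∈ A x_{k+1} for every k ∈ ℕ (the metric PPA x_{k+1} = (A + Q)⁻¹ Q x_k), and let x⋆ ∈ H satisfy 0 ∈ A x⋆. Then for every k ∈ ℕ, ⟪Q(x_{k+1} − x_k), x_{k+1} − x_k⟫ ≤ (1/(k+1)) · ⟪Q(x_0 − x⋆), x_0 − x⋆⟫; equivalently, ‖x_{k+1} − x_k‖_Q ≤ (1/√(k+1)) ‖x_0 − x⋆‖_Q. -/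
open RealInnerProductSpace

/-- Corollary 3.3(i): rate of `Q`-based regularity for the degenerate metric
proximal point algorithm `x_{k+1} = (A + Q)⁻¹ Q x_k`. -/
theorem stmt_13
    {H : Type*} [NormedAddCommGroup H] [InnerProductSpace ℝ H] [CompleteSpace H]
    (Q : H →L[ℝ] H)
    (hQsym : ∀ x y : H, ⟪Q x, y⟫ = ⟪x, Q y⟫)
    (hQpos : ∀ x : H, 0 ≤ ⟪Q x, x⟫)
    (A : H → Set H)
    (hA : ∀ x y u v : H, u ∈ A x → v ∈ A y → 0 ≤ ⟪u - v, x - y⟫)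
    (x : ℕ → H)
    (hiter : ∀ k : ℕ, Q (x k) - Q (x (k + 1)) ∈ A (x (k + 1)))
    (xs : H) (hxs : (0 : H) ∈ A xs) :
    ∀ k : ℕ, ⟪Q (x (k + 1) - x k), x (k + 1) - x k⟫ ≤
      (1 / ((k : ℝ) + 1)) * ⟪Q (x 0 - xs), x 0 - xs⟫ := by
  -- bilinear form basics
  have Bswap : ∀ a b : H, ⟪Q a, b⟫ = ⟪Q b, a⟫ := by
    intro a b; rw [hQsym, real_inner_comm]
  have Bsub : ∀ a b c : H, ⟪Q (a - b), c⟫ = ⟪Q a, c⟫ - ⟪Q b, c⟫ := by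
    intro a b c; rw [map_sub, inner_sub_left]
  have Bsubr : ∀ a b c : H, ⟪Q a, b - c⟫ = ⟪Q a, b⟫ - ⟪Q a, c⟫ := by
    intro a b c; rw [inner_sub_right]
  set e : ℕ → ℝ := fun k => ⟪Q (x (k + 1) - x k), x (k + 1) - x k⟫ with he
  set s : ℕ → ℝ := fun k => ⟪Q (x k - xs), x k - xs⟫ with hs
  -- Fejér inequality : e k + s (k+1) ≤ s k
  have fejer : ∀ k : ℕ, e k + s (k + 1) ≤ s k := by
    intro k
    have h := hA (x (k + 1)) xs (Q (x k) - Q (x (k + 1))) 0 (hiter k) hxs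
    have h' : 0 ≤ ⟪Q (x k - x (k + 1)), x (k + 1) - xs⟫ := by
      rw [map_sub]
      simpa using h
    have key : s k - s (k + 1) - e k = 2 * ⟪Q (x k - x (k + 1)), x (k + 1) - xs⟫ := by
      simp only [hs, he, Bsub, Bsubr]
      rw [Bswap (x k) (x (k+1)), Bswap (x k) xs, Bswap (x (k+1)) xs]
      ring
    linarith
  -- monotonicity : e (k+1) ≤ e k
  have mono : ∀ k : ℕ, e (k + 1) ≤ e k := by
    intro k
    have h := hA (x (k + 1)) (x (k + 2)) (Q (x k) - Q (x (k + 1)))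
      (Q (x (k + 1)) - Q (x (k + 2))) (hiter k) (hiter (k + 1))
    set d : H := x k - x (k + 1) with hd
    set d' : H := x (k + 1) - x (k + 2) with hd'
    have h1 : 0 ≤ ⟪Q d, d'⟫ - ⟪Q d', d'⟫ := by
      have : Q (x k) - Q (x (k + 1)) - (Q (x (k + 1)) - Q (x (k + 2)))
          = Q d - Q d' := by simp [hd, hd', map_sub]
      rw [this] at h
      rw [← Bsub]
      simpa [hd'] using h
    have sq : ∀ a b : H, 0 ≤ ⟪Q a, a⟫ - 2 * ⟪Q a, b⟫ + ⟪Q b, b⟫ := by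
      intro a b
      have := hQpos (a - b)
      rw [Bsub, Bsubr, Bsubr, Bswap b a] at this
      linarith
    have h2 := sq d d'
    have ek : e k = ⟪Q d, d⟫ := by
      simp only [he]
      have : x (k + 1) - x k = -d := by simp [hd]
      rw [this, map_neg, inner_neg_neg]
    have ek' : e (k + 1) = ⟪Q d', d'⟫ := by
      simp only [he]
      have : x (k + 1 + 1) - x (k + 1) = -d' := by simp [hd']
      rw [this, map_neg, inner_neg_neg]
    rw [ek, ek']
    linarith
  -- summation by induction
  have main : ∀ k : ℕ, ((k : ℝ) + 1) * e k ≤ s 0 - s (k + 1) := by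
    intro k
    induction k with
    | zero =>
      have := fejer 0
      push_cast
      linarith
    | succ n ih =>
      have h1 := mono n
      have h2 := fejer (n + 1)
      have hnn : (0 : ℝ) ≤ (n : ℝ) + 1 := by positivity
      have : ((n : ℝ) + 1) * e (n + 1) ≤ ((n : ℝ) + 1) * e n :=
        mul_le_mul_of_nonneg_left h1 hnn
      push_cast
      nlinarith
  intro k
  have hk : (0 : ℝ) < (k : ℝ) + 1 := by positivity
  have hsnn : 0 ≤ s (k + 1) := hQpos _
  have := main k
  have h2 : ((k : ℝ) + 1) * e k ≤ s 0 := by linarith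
  rw [show (⟪Q (x (k + 1) - x k), x (k + 1) - x k⟫ : ℝ) = e k from rfl,
    show (⟪Q (x 0 - xs), x 0 - xs⟫ : ℝ) = s 0 from rfl,
    one_div, inv_mul_eq_div, le_div_iff₀ hk]
  linarith [h2]
end

section
/- Constancy of f along the kernel of Q (proved in the discussion following Lemma 3.5): If x, y ∈ H satisfy Q(y − x) = 0 (i.e. y − x ∈ ker Q), then f(x) = f(y); consequently the directional derivative of f at any point along any direction in ker Q vanishes. -/
/-!
Symmetry of `Q` gives `ker Q = (range Q)ᗮ`, so a gradient with values in `range Q` is orthogonal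
to every kernel direction `s`. Along the line `t ↦ x + t • s` the derivative of `f` is then zero,
so `f` is constant on it.
-/

open RealInnerProductSpace

theorem HasGradientAt.apply_add_eq_of_inner_eq_zero
    {H : Type*} [NormedAddCommGroup H] [InnerProductSpace ℝ H] [CompleteSpace H]
    {f : H → ℝ} {f' : H → H} (hf : ∀ x, HasGradientAt f (f' x) x)
    {s : H} (hs : ∀ x, ⟪f' x, s⟫ = 0) (x : H) :
    f (x + s) = f x := by
  have hline : ∀ t : ℝ, HasDerivAt (fun t : ℝ ↦ f (x + t • s)) 0 t := fun t ↦ by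
    have hpath : HasDerivAt (fun t : ℝ ↦ x + t • s) s t := by
      simpa using ((hasDerivAt_id t).smul_const s).const_add x
    have := (hf (x + t • s)).hasFDerivAt.comp_hasDerivAt t hpath
    rwa [InnerProductSpace.toDual_apply_apply, hs] at this
  simpa using is_const_of_deriv_eq_zero (fun t ↦ (hline t).differentiableAt)
    (fun t ↦ (hline t).deriv) 1 0

theorem stmt_15_general
    {H : Type*} [NormedAddCommGroup H] [InnerProductSpace ℝ H] [CompleteSpace H]
    (Q : H →L[ℝ] H)
    (hQsym : ∀ x y : H, ⟪Q x, y⟫ = ⟪x, Q y⟫)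
    (f : H → ℝ) (f' : H → H)
    (hf : ∀ x : H, HasGradientAt f (f' x) x)
    (hranf' : Set.range f' ⊆ Set.range Q) :
    (∀ x y : H, Q (y - x) = 0 → f x = f y) ∧
      (∀ x s : H, Q s = 0 → ⟪f' x, s⟫ = 0) := by
  have hperp : ∀ x s : H, Q s = 0 → ⟪f' x, s⟫ = 0 := fun x s hs ↦ by
    have hs' : s ∈ (LinearMap.range (Q : H →ₗ[ℝ] H))ᗮ := by
      rwa [LinearMap.IsSymmetric.orthogonal_range hQsym]
    exact (Submodule.mem_orthogonal _ s).mp hs' _ (hranf' ⟨x, rfl⟩)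
  refine ⟨fun x y hxy ↦ ?_, hperp⟩
  simpa using (HasGradientAt.apply_add_eq_of_inner_eq_zero hf (hperp · _ hxy) x).symm

/-- Constancy of `f` along the kernel of `Q`: if `y − x ∈ ker Q` then `f x = f y`;
consequently the directional derivative of `f` along any direction in `ker Q` vanishes. -/
theorem stmt_15
    {H : Type*} [NormedAddCommGroup H] [InnerProductSpace ℝ H] [CompleteSpace H]
    (Q : H →L[ℝ] H)
    (hQsym : ∀ x y : H, ⟪Q x, y⟫ = ⟪x, Q y⟫)
    (hQpos : ∀ x : H, 0 ≤ ⟪Q x, x⟫)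
    (ν : ℝ) (hν : 0 < ν)
    (hνQ : ∀ w ∈ (LinearMap.ker (Q : H →ₗ[ℝ] H))ᗮ, ν * ‖w‖ ≤ ‖Q w‖)
    (β : ℝ) (hβ : 0 ≤ β)
    (f : H → ℝ) (f' : H → H)
    (hf : ∀ x : H, HasGradientAt f (f' x) x)
    (hranf' : Set.range f' ⊆ Set.range Q)
    (hcoco : ∀ x y : H, ‖f' x - f' y‖ ^ 2 ≤ β * ⟪f' x - f' y, x - y⟫) :
    (∀ x y : H, Q (y - x) = 0 → f x = f y) ∧
      (∀ x s : H, Q s = 0 → ⟪f' x, s⟫ = 0) :=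
  stmt_15_general Q hQsym f f' hf hranf'
end

section
/- Proposition 3.8 (non-ergodic O(1/k) rate in objective value for the degenerate-metric proximal forward–backward iteration): Assume additionally that f is convex (f(y) ≥ f(x) + ⟪∇f(x), y − x⟫ for all x, y) and that ν ≥ β. Let g : H → ℝ, let (x_k) be a sequence in H, and let (u_k) be a sequence in H such that for every k ∈ ℕ: u_k is a subgradient of g at x_{k+1} (g(z) ≥ g(x_{k+1}) + ⟪u_k, z − x_{k+1}⟫ for all z ∈ H) and 0 = ∇f(x_k) + u_k + Q(x_{k+1} − x_k). Let x⋆ ∈ H be a minimizer of f + g (i.e. (f+g)(x⋆) ≤ (f+g)(z) for all z ∈ H). Then for every integer k ≥ 1, (f+g)(x_k) − (f+g)(x⋆) ≤ ⟪Q(x_0 − x⋆), x_0 − x⋆⟫ / (2k). -/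
/-!
On `(ker Q)ᗮ`, which `Q` leaves invariant, the bound `ν ‖w‖ ≤ ‖Q w‖` upgrades to
`ν ‖w‖² ≤ ⟪Q w, w⟫`: if the bottom `m` of the numerical range of `Q` there were below `ν`,
an almost-minimising unit vector `v` would be an approximate eigenvector, `‖Q v - m v‖² ≤
‖Q - m‖ (⟪Q v, v⟫ - m)` by Cauchy–Schwarz for the positive form `⟪(Q - m) ·, ·⟫`, contradicting
`‖Q v‖ ≥ ν`. Since `∇f` takes values in `range Q ⊥ ker Q`, the convex `f` is constant along
`ker Q`, so the descent lemma for the `β`-Lipschitz gradient and `β ≤ ν` give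
`f (a + d) ≤ f a + ⟪∇f a, d⟫ + ‖d‖_Q² / 2`. The three-point identity for `Q` then yields, for one
step and every `z`, `F x₊ - F z ≤ (‖x - z‖_Q² - ‖x₊ - z‖_Q²) / 2` with `F = f + g`: with `z = x`
the values `F x_k` decrease, and summing with `z = x⋆` gives `k (F x_k - F x⋆) ≤ ‖x₀ - x⋆‖_Q² / 2`.
-/

open RealInnerProductSpace

section Spectral

variable {H : Type*} [NormedAddCommGroup H] [InnerProductSpace ℝ H]

theorem inner_apply_sq_le_of_nonneg_on {T : H →ₗ[ℝ] H} (hT : T.IsSymmetric)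
    {K : Submodule ℝ H} (hpos : ∀ z ∈ K, 0 ≤ ⟪T z, z⟫) {v y : H} (hv : v ∈ K) (hy : y ∈ K) :
    ⟪T v, y⟫ ^ 2 ≤ ⟪T v, v⟫ * ⟪T y, y⟫ := by
  have hdisc := discrim_le_zero (a := ⟪T y, y⟫) (b := 2 * ⟪T v, y⟫) (c := ⟪T v, v⟫) fun t => by
    have h := hpos (v + t • y) (K.add_mem hv (K.smul_mem t hy))
    simp only [map_add, map_smul, inner_add_left, inner_add_right, real_inner_smul_left,
      real_inner_smul_right, hT y v, real_inner_comm (T v) y] at h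
    linarith
  rw [discrim] at hdisc
  linarith

theorem norm_apply_sq_le_of_nonneg_on {T : H →L[ℝ] H} (hT : (T : H →ₗ[ℝ] H).IsSymmetric)
    {K : Submodule ℝ H} (hTK : ∀ z ∈ K, T z ∈ K) (hpos : ∀ z ∈ K, 0 ≤ ⟪T z, z⟫)
    {v : H} (hv : v ∈ K) :
    ‖T v‖ ^ 2 ≤ ‖T‖ * ⟪T v, v⟫ := by
  have hCS : ‖T v‖ ^ 2 * ‖T v‖ ^ 2 ≤ ⟪T v, v⟫ * ⟪T (T v), T v⟫ := by
    simpa [← sq, real_inner_self_eq_norm_sq] using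
      inner_apply_sq_le_of_nonneg_on hT hpos hv (hTK v hv)
  have hbound : ⟪T (T v), T v⟫ ≤ ‖T‖ * ‖T v‖ ^ 2 :=
    calc ⟪T (T v), T v⟫ ≤ ‖T (T v)‖ * ‖T v‖ := real_inner_le_norm _ _
      _ ≤ ‖T‖ * ‖T v‖ * ‖T v‖ := by gcongr; exact T.le_opNorm _
      _ = ‖T‖ * ‖T v‖ ^ 2 := by ring
  rcases (sq_nonneg ‖T v‖).eq_or_lt with h0 | hpos'
  · rw [← h0]
    exact mul_nonneg (norm_nonneg T) (hpos v hv)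
  · refine le_of_mul_le_mul_right ?_ hpos'
    calc ‖T v‖ ^ 2 * ‖T v‖ ^ 2 ≤ ⟪T v, v⟫ * (‖T‖ * ‖T v‖ ^ 2) :=
          hCS.trans (mul_le_mul_of_nonneg_left hbound (hpos v hv))
      _ = ‖T‖ * ⟪T v, v⟫ * ‖T v‖ ^ 2 := by ring

theorem mul_norm_sq_le_inner_of_forall_norm_eq_one {Q : H →ₗ[ℝ] H} {K : Submodule ℝ H} {m : ℝ}
    (hm : ∀ v ∈ K, ‖v‖ = 1 → m ≤ ⟪Q v, v⟫) {w : H} (hw : w ∈ K) :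
    m * ‖w‖ ^ 2 ≤ ⟪Q w, w⟫ := by
  rcases eq_or_ne w 0 with rfl | hw0
  · simp
  have hnorm : 0 < ‖w‖ := norm_pos_iff.2 hw0
  have h := hm _ (K.smul_mem ‖w‖⁻¹ hw) (norm_smul_inv_norm hw0)
  rw [map_smul, real_inner_smul_left, real_inner_smul_right, ← mul_assoc,
    ← mul_inv, ← sq, le_inv_mul_iff₀ (by positivity)] at h
  linarith

theorem le_of_forall_exists_inner_lt_add {Q : H →L[ℝ] H} (hQ : (Q : H →ₗ[ℝ] H).IsSymmetric)
    {K : Submodule ℝ H} (hQK : ∀ z ∈ K, Q z ∈ K) {ν m : ℝ} (hm0 : 0 ≤ m)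
    (hν : ∀ w ∈ K, ν * ‖w‖ ≤ ‖Q w‖) (hm : ∀ w ∈ K, m * ‖w‖ ^ 2 ≤ ⟪Q w, w⟫)
    (happrox : ∀ ε > 0, ∃ v ∈ K, ‖v‖ = 1 ∧ ⟪Q v, v⟫ < m + ε) :
    ν ≤ m := by
  set T := Q - m • ContinuousLinearMap.id ℝ H
  have hTapply : ∀ z, T z = Q z - m • z := fun z => rfl
  have hT : (T : H →ₗ[ℝ] H).IsSymmetric := fun x y => by
    simp only [ContinuousLinearMap.coe_coe, hTapply, inner_sub_left, inner_sub_right,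
      real_inner_smul_left, real_inner_smul_right]
    rw [show ⟪Q x, y⟫ = ⟪x, Q y⟫ from hQ x y]
  have hTinner : ∀ z, ⟪T z, z⟫ = ⟪Q z, z⟫ - m * ‖z‖ ^ 2 := fun z => by
    rw [hTapply, inner_sub_left, real_inner_smul_left, real_inner_self_eq_norm_sq]
  have hTK : ∀ z ∈ K, T z ∈ K := fun z hz => K.sub_mem (hQK z hz) (K.smul_mem m hz)
  have hTpos : ∀ z ∈ K, 0 ≤ ⟪T z, z⟫ := fun z hz => by linarith [hTinner z, hm z hz]
  by_contra! hlt
  obtain ⟨v, hvK, hv1, hvε⟩ :=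
    happrox ((ν - m) ^ 2 / (‖T‖ + 1)) (by have := sub_pos.2 hlt; positivity)
  have hgap : ν - m ≤ ‖T v‖ := by
    have hQv : ‖Q v‖ ≤ ‖T v‖ + m :=
      calc ‖Q v‖ = ‖T v + m • v‖ := by rw [hTapply, sub_add_cancel]
        _ ≤ ‖T v‖ + ‖m • v‖ := norm_add_le _ _
        _ = ‖T v‖ + m := by rw [norm_smul, hv1, Real.norm_of_nonneg hm0, mul_one]
    have h := hν v hvK
    rw [hv1, mul_one] at h
    linarith
  have hsmall : ‖T v‖ ^ 2 ≤ ‖T‖ * ((ν - m) ^ 2 / (‖T‖ + 1)) := by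
    refine (norm_apply_sq_le_of_nonneg_on hT hTK hTpos hvK).trans ?_
    rw [hTinner, hv1]
    gcongr
    linarith
  have hlt' : ‖T‖ * ((ν - m) ^ 2 / (‖T‖ + 1)) < (ν - m) ^ 2 := by
    rw [mul_div_assoc', div_lt_iff₀ (by positivity)]
    nlinarith [norm_nonneg T]
  nlinarith [pow_le_pow_left₀ (sub_nonneg.2 hlt.le) hgap 2]

theorem mul_norm_sq_le_inner_of_mul_norm_le_norm {Q : H →L[ℝ] H}
    (hQ : (Q : H →ₗ[ℝ] H).IsSymmetric) (hQpos : ∀ x, 0 ≤ ⟪Q x, x⟫) {K : Submodule ℝ H}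
    (hQK : ∀ z ∈ K, Q z ∈ K) {ν : ℝ} (hν : ∀ w ∈ K, ν * ‖w‖ ≤ ‖Q w‖) {w : H} (hw : w ∈ K) :
    ν * ‖w‖ ^ 2 ≤ ⟪Q w, w⟫ := by
  rcases eq_or_ne w 0 with rfl | hw0
  · simp
  set S := (fun v => ⟪Q v, v⟫) '' {v | v ∈ K ∧ ‖v‖ = 1}
  have hS : S.Nonempty := ⟨_, _, ⟨K.smul_mem ‖w‖⁻¹ hw, norm_smul_inv_norm hw0⟩, rfl⟩
  have hS0 : 0 ∈ lowerBounds S := by rintro _ ⟨v, -, rfl⟩; exact hQpos v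
  have hm : ∀ v ∈ K, sInf S * ‖v‖ ^ 2 ≤ ⟪Q v, v⟫ := fun v hv =>
    mul_norm_sq_le_inner_of_forall_norm_eq_one
      (fun u hu hu1 => csInf_le ⟨0, hS0⟩ ⟨u, ⟨hu, hu1⟩, rfl⟩) hv
  have hνm : ν ≤ sInf S := by
    refine le_of_forall_exists_inner_lt_add hQ hQK ?_ hν hm fun ε hε => ?_
    · exact le_csInf hS hS0
    · obtain ⟨_, ⟨v, ⟨hv, hv1⟩, rfl⟩, hlt⟩ := exists_lt_of_csInf_lt hS (lt_add_of_pos_right _ hε)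
      exact ⟨v, hv, hv1, hlt⟩
  exact (mul_le_mul_of_nonneg_right hνm (sq_nonneg _)).trans (hm w hw)

theorem apply_mem_orthogonal_ker {Q : H →ₗ[ℝ] H} (hQ : Q.IsSymmetric) (z : H) :
    Q z ∈ (LinearMap.ker Q)ᗮ :=
  hQ.orthogonal_range ▸ Submodule.le_orthogonal_orthogonal _ (LinearMap.mem_range_self Q z)

end Spectral

section Smooth

variable {H : Type*} [NormedAddCommGroup H] [InnerProductSpace ℝ H] {f : H → ℝ} {f' : H → H}
  {β : ℝ}

theorem norm_sub_le_of_cocoercive (hβ : 0 ≤ β)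
    (hcoco : ∀ x y, ‖f' x - f' y‖ ^ 2 ≤ β * ⟪f' x - f' y, x - y⟫) (a b : H) :
    ‖f' a - f' b‖ ≤ β * ‖a - b‖ := by
  have h : ‖f' a - f' b‖ ^ 2 ≤ β * (‖f' a - f' b‖ * ‖a - b‖) :=
    (hcoco a b).trans (mul_le_mul_of_nonneg_left (real_inner_le_norm _ _) hβ)
  nlinarith [norm_nonneg (f' a - f' b), mul_nonneg hβ (norm_nonneg (a - b))]

theorem apply_add_le_of_lipschitz [CompleteSpace H] (hf : ∀ x, HasGradientAt f (f' x) x)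
    (hlip : ∀ a b, ‖f' a - f' b‖ ≤ β * ‖a - b‖) (a w : H) :
    f (a + w) ≤ f a + ⟪f' a, w⟫ + β / 2 * ‖w‖ ^ 2 := by
  set φ : ℝ → ℝ := fun t => f (a + t • w) - t * ⟪f' a, w⟫ - β / 2 * t ^ 2 * ‖w‖ ^ 2
  have hφ : ∀ t, HasDerivAt φ (⟪f' (a + t • w) - f' a, w⟫ - β * t * ‖w‖ ^ 2) t := by
    intro t
    have hline : HasDerivAt (fun s : ℝ => a + s • w) w t := by
      simpa using ((hasDerivAt_id t).smul_const w).const_add a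
    have hcomp := (hf (a + t • w)).hasFDerivAt.comp_hasDerivAt t hline
    simp only [InnerProductSpace.toDual_apply_apply] at hcomp
    refine ((hcomp.sub ((hasDerivAt_id t).mul_const ⟪f' a, w⟫)).sub
      (((hasDerivAt_pow 2 t).const_mul (β / 2)).mul_const (‖w‖ ^ 2))).congr_deriv ?_
    rw [inner_sub_left, Nat.cast_ofNat, Nat.add_one_sub_one, pow_one]
    ring
  have hderiv : ∀ t ∈ interior (Set.Icc (0 : ℝ) 1),
      ⟪f' (a + t • w) - f' a, w⟫ - β * t * ‖w‖ ^ 2 ≤ 0 := by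
    intro t ht
    rw [interior_Icc] at ht
    have hlipt := hlip (a + t • w) a
    rw [add_sub_cancel_left, norm_smul, Real.norm_of_nonneg ht.1.le] at hlipt
    have := (real_inner_le_norm (f' (a + t • w) - f' a) w).trans
      (mul_le_mul_of_nonneg_right hlipt (norm_nonneg w))
    linarith
  have hanti : AntitoneOn φ (Set.Icc 0 1) :=
    antitoneOn_of_hasDerivWithinAt_nonpos (convex_Icc 0 1)
      (fun t _ => (hφ t).continuousAt.continuousWithinAt)
      (fun t _ => (hφ t).hasDerivWithinAt) hderiv
  have h01 := hanti (Set.left_mem_Icc.2 zero_le_one) (Set.right_mem_Icc.2 zero_le_one) zero_le_one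
  simp only [φ, zero_smul, add_zero, one_smul, zero_mul, sub_zero, one_mul] at h01
  linarith

theorem apply_add_eq_of_inner_eq_zero (hconv : ∀ x y, f x + ⟪f' x, y - x⟫ ≤ f y) {p : H}
    (hp : ∀ y, ⟪f' y, p⟫ = 0) (a : H) :
    f (a + p) = f a := by
  have h₁ := hconv a (a + p)
  have h₂ := hconv (a + p) a
  rw [add_sub_cancel_left, hp] at h₁
  rw [sub_add_cancel_left, inner_neg_right, hp] at h₂
  linarith

end Smooth

section ForwardBackward

variable {H : Type*} [NormedAddCommGroup H] [InnerProductSpace ℝ H]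

theorem apply_add_le_of_cocoercive [CompleteSpace H] {Q : H →L[ℝ] H}
    (hQ : (Q : H →ₗ[ℝ] H).IsSymmetric) (hQpos : ∀ x, 0 ≤ ⟪Q x, x⟫) {ν β : ℝ}
    (hνQ : ∀ w ∈ (LinearMap.ker (Q : H →ₗ[ℝ] H))ᗮ, ν * ‖w‖ ≤ ‖Q w‖) (hβ : 0 ≤ β) (hβν : β ≤ ν)
    {f : H → ℝ} {f' : H → H} (hf : ∀ x, HasGradientAt f (f' x) x)
    (hranf' : Set.range f' ⊆ Set.range Q)
    (hcoco : ∀ x y, ‖f' x - f' y‖ ^ 2 ≤ β * ⟪f' x - f' y, x - y⟫)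
    (hconv : ∀ x y, f x + ⟪f' x, y - x⟫ ≤ f y) (a d : H) :
    f (a + d) ≤ f a + ⟪f' a, d⟫ + ⟪Q d, d⟫ / 2 := by
  set K := LinearMap.ker (Q : H →ₗ[ℝ] H)
  have : CompleteSpace K := Q.isClosed_ker.completeSpace_coe
  obtain ⟨p, hp, w, hw, rfl⟩ := K.exists_add_mem_mem_orthogonal d
  have hgrad : ∀ y, ⟪f' y, p⟫ = 0 := fun y => by
    obtain ⟨v, hv⟩ := hranf' ⟨y, rfl⟩
    rw [← hv]
    exact Submodule.inner_left_of_mem_orthogonal hp (apply_mem_orthogonal_ker hQ v)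
  have hQd : ⟪Q (p + w), p + w⟫ = ⟪Q w, w⟫ := by
    rw [map_add, show Q p = 0 from hp, zero_add, inner_add_right,
      show ⟪Q w, p⟫ = 0 from
        Submodule.inner_left_of_mem_orthogonal hp (apply_mem_orthogonal_ker hQ w), zero_add]
  have hcurv : β * ‖w‖ ^ 2 ≤ ⟪Q w, w⟫ :=
    (mul_le_mul_of_nonneg_right hβν (sq_nonneg _)).trans <|
      mul_norm_sq_le_inner_of_mul_norm_le_norm hQ hQpos
        (fun z _ => apply_mem_orthogonal_ker hQ z) hνQ hw
  calc f (a + (p + w)) = f (a + w) := by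
        rw [show a + (p + w) = a + w + p by abel]
        exact apply_add_eq_of_inner_eq_zero hconv hgrad _
    _ ≤ f a + ⟪f' a, w⟫ + β / 2 * ‖w‖ ^ 2 :=
        apply_add_le_of_lipschitz hf (norm_sub_le_of_cocoercive hβ hcoco) a w
    _ ≤ f a + ⟪f' a, p + w⟫ + ⟪Q (p + w), p + w⟫ / 2 := by
        rw [inner_add_right, hgrad, hQd]
        linarith

theorem objective_sub_le_of_forward_backward_step {Q : H →L[ℝ] H}
    (hQ : (Q : H →ₗ[ℝ] H).IsSymmetric) {f g : H → ℝ} {f' : H → H}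
    (hdesc : ∀ a d, f (a + d) ≤ f a + ⟪f' a, d⟫ + ⟪Q d, d⟫ / 2)
    (hconv : ∀ x y, f x + ⟪f' x, y - x⟫ ≤ f y) {x x' u : H}
    (hsub : ∀ z, g x' + ⟪u, z - x'⟫ ≤ g z) (hopt : 0 = f' x + u + Q (x' - x)) (z : H) :
    f x' + g x' - (f z + g z) ≤ (⟪Q (x - z), x - z⟫ - ⟪Q (x' - z), x' - z⟫) / 2 := by
  set d := x' - x
  have hdesc' := hdesc x d
  rw [add_sub_cancel] at hdesc'
  have hconv' := hconv x z
  have hsub' := hsub z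
  have hopt' : ⟪f' x, x' - z⟫ + ⟪u, x' - z⟫ + ⟪Q d, x' - z⟫ = 0 := by
    rw [← inner_add_left, ← inner_add_left, ← hopt, inner_zero_left]
  have hthree : ⟪Q (x - z), x - z⟫ = ⟪Q (x' - z), x' - z⟫ - 2 * ⟪Q d, x' - z⟫ + ⟪Q d, d⟫ := by
    have hsplit : x - z = (x' - z) - d := by simp only [d]; abel
    have hsymm : ⟪Q (x' - z), d⟫ = ⟪Q d, x' - z⟫ := by
      rw [real_inner_comm]; exact (hQ d (x' - z)).symm
    rw [hsplit, map_sub, inner_sub_left, inner_sub_right (Q (x' - z)) (x' - z) d,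
      inner_sub_right (Q d) (x' - z) d, hsymm]
    ring
  rw [hthree]
  simp only [d, inner_sub_right] at hdesc' hconv' hsub' hopt' ⊢
  linarith

end ForwardBackward

theorem nat_mul_le_sub_of_antitone {a D : ℕ → ℝ} (ha : Antitone a)
    (hstep : ∀ k, a (k + 1) ≤ D k - D (k + 1)) (k : ℕ) :
    k * a k ≤ D 0 - D k := by
  induction k with
  | zero => simp
  | succ k ih =>
    have := mul_le_mul_of_nonneg_left (ha k.le_succ) k.cast_nonneg
    push_cast
    linarith [hstep k]

theorem stmt_18_general
    {H : Type*} [NormedAddCommGroup H] [InnerProductSpace ℝ H] [CompleteSpace H]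
    (Q : H →L[ℝ] H)
    (hQsym : ∀ x y : H, ⟪Q x, y⟫ = ⟪x, Q y⟫)
    (hQpos : ∀ x : H, 0 ≤ ⟪Q x, x⟫)
    (ν : ℝ)
    (hνQ : ∀ w ∈ (LinearMap.ker (Q : H →ₗ[ℝ] H))ᗮ, ν * ‖w‖ ≤ ‖Q w‖)
    (β : ℝ) (hβ : 0 ≤ β)
    (hνβ : β ≤ ν)
    (f : H → ℝ) (f' : H → H)
    (hf : ∀ x : H, HasGradientAt f (f' x) x)
    (hranf' : Set.range f' ⊆ Set.range Q)
    (hcoco : ∀ x y : H, ‖f' x - f' y‖ ^ 2 ≤ β * ⟪f' x - f' y, x - y⟫)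
    (hfconvex : ∀ x y : H, f x + ⟪f' x, y - x⟫ ≤ f y)
    (g : H → ℝ) (x u : ℕ → H)
    (hsub : ∀ k : ℕ, ∀ z : H, g (x (k + 1)) + ⟪u k, z - x (k + 1)⟫ ≤ g z)
    (hopt : ∀ k : ℕ, 0 = f' (x k) + u k + Q (x (k + 1) - x k))
    (xs : H) :
    ∀ k : ℕ, 1 ≤ k →
      (f (x k) + g (x k)) - (f xs + g xs) ≤
        ⟪Q (x 0 - xs), x 0 - xs⟫ / (2 * (k : ℝ)) := by
  intro k hk
  have hdesc := apply_add_le_of_cocoercive hQsym hQpos hνQ hβ hνβ hf hranf' hcoco hfconvex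
  have hstep (j : ℕ) (z : H) :=
    objective_sub_le_of_forward_backward_step hQsym hdesc hfconvex (hsub j) (hopt j) z
  have hanti : Antitone fun j => f (x j) + g (x j) - (f xs + g xs) :=
    antitone_nat_of_succ_le fun j => by
      have h := hstep j (x j)
      rw [sub_self, map_zero, inner_zero_left] at h
      linarith [hQpos (x (j + 1) - x j)]
  have hrate := nat_mul_le_sub_of_antitone hanti
    (D := fun j => ⟪Q (x j - xs), x j - xs⟫ / 2) (fun j => by linarith [hstep j xs]) k
  have hkpos : (0 : ℝ) < k := Nat.cast_pos.2 hk
  rw [le_div_iff₀ (by positivity)]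
  linarith [hQpos (x k - xs)]

/-- Proposition 3.8: non-ergodic `O(1/k)` rate in objective value for the
degenerate-metric proximal forward–backward iteration. -/
theorem stmt_18
    {H : Type*} [NormedAddCommGroup H] [InnerProductSpace ℝ H] [CompleteSpace H]
    (Q : H →L[ℝ] H)
    (hQsym : ∀ x y : H, ⟪Q x, y⟫ = ⟪x, Q y⟫)
    (hQpos : ∀ x : H, 0 ≤ ⟪Q x, x⟫)
    (ν : ℝ) (hν : 0 < ν)
    (hνQ : ∀ w ∈ (LinearMap.ker (Q : H →ₗ[ℝ] H))ᗮ, ν * ‖w‖ ≤ ‖Q w‖)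
    (β : ℝ) (hβ : 0 ≤ β)
    (hνβ : β ≤ ν)
    (f : H → ℝ) (f' : H → H)
    (hf : ∀ x : H, HasGradientAt f (f' x) x)
    (hranf' : Set.range f' ⊆ Set.range Q)
    (hcoco : ∀ x y : H, ‖f' x - f' y‖ ^ 2 ≤ β * ⟪f' x - f' y, x - y⟫)
    (hfconvex : ∀ x y : H, f x + ⟪f' x, y - x⟫ ≤ f y)
    (g : H → ℝ) (x u : ℕ → H)
    (hsub : ∀ k : ℕ, ∀ z : H, g (x (k + 1)) + ⟪u k, z - x (k + 1)⟫ ≤ g z)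
    (hopt : ∀ k : ℕ, 0 = f' (x k) + u k + Q (x (k + 1) - x k))
    (xs : H) (hxs : ∀ z : H, f xs + g xs ≤ f z + g z) :
    ∀ k : ℕ, 1 ≤ k →
      (f (x k) + g (x k)) - (f xs + g xs) ≤
        ⟪Q (x 0 - xs), x 0 - xs⟫ / (2 * (k : ℝ)) :=
  stmt_18_general Q hQsym hQpos ν hνQ β hβ hνβ f f' hf hranf' hcoco hfconvex g x u hsub hopt xs
end
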